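/- arXiv:0712.1249 — 13 statements merged into one kernel-verified Lean document; each statement's English description precedes it below -/
import Mathlib

section
/- Let G be a finite simple graph on vertex set {x_1,…,x_n} without isolated vertices. If a = (a_1,…,a_n) ∈ ℕ^n is a nonzero irreducible k-cover of G, then 0 ≤ k ≤ 2 and 0 ≤ a_i ≤ 2 for every i = 1,…,n. -/
/-- A nonzero vector `a : ℕ^n` is a `b`-cover of the graph `G` if
`a i + a j ≥ b` for every edge `{i, j}` of `G`. -/
def IsBCover {n : ℕ} (G : SimpleGraph (Fin n)) (a : Fin n → ℕ) (b : ℕ) : Prop :=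
  a ≠ 0 ∧ ∀ i j : Fin n, G.Adj i j → b ≤ a i + a j

/-- A `b`-cover is irreducible if it is not the sum of a (nonzero) `i`-cover and a
(nonzero) `j`-cover with `b = i + j`. -/
def IsIrredBCover {n : ℕ} (G : SimpleGraph (Fin n)) (a : Fin n → ℕ) (b : ℕ) : Prop :=
  IsBCover G a b ∧
    ¬ ∃ (c d : Fin n → ℕ) (i j : ℕ),
        IsBCover G c i ∧ IsBCover G d j ∧ a = c + d ∧ b = i + j

theorem irreducible_cover_bounds {n : ℕ} (G : SimpleGraph (Fin n))
    (hG : ∀ i : Fin n, ∃ j : Fin n, G.Adj i j)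
    (a : Fin n → ℕ) (k : ℕ) (ha : a ≠ 0)
    (h : IsIrredBCover G a k) :
    k ≤ 2 ∧ ∀ i : Fin n, a i ≤ 2 := by
  obtain ⟨⟨-, hcov⟩, hirred⟩ := h
  obtain ⟨p, hp⟩ : ∃ p, a p ≠ 0 := by
    by_contra hc
    push_neg at hc
    exact ha (funext fun i => hc i)
  obtain ⟨q, hpq⟩ := hG p
  have hpqcov := hcov p q hpq
  have hk2 : k ≤ 2 := by
    by_contra hk
    push_neg at hk
    apply hirred
    rcases Nat.even_or_odd k with ⟨m, hm⟩ | ⟨m, hm⟩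
    · -- k = m + m, m ≥ 2; decompose as (k-2)-cover + 2-cover
      refine ⟨fun i => a i - min (a i - (m - 1)) 2, fun i => min (a i - (m - 1)) 2,
        k - 2, 2, ⟨?_, ?_⟩, ⟨?_, ?_⟩, ?_, by omega⟩
      · intro hc0
        have h1 := congrFun hc0 p
        have h2 := congrFun hc0 q
        simp only [Pi.zero_apply] at h1 h2
        omega
      · intro i j hij
        have := hcov i j hij
        simp only []
        omega
      · intro hd0
        have h1 := congrFun hd0 p
        have h2 := congrFun hd0 q
        simp only [Pi.zero_apply] at h1 h2
        omega
      · intro i j hij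
        have := hcov i j hij
        simp only []
        omega
      · funext i
        simp only [Pi.add_apply]
        omega
    · -- k = 2m+1, m ≥ 1; decompose as (k-1)-cover + 1-cover
      refine ⟨fun i => a i - min (a i - m) 1, fun i => min (a i - m) 1,
        k - 1, 1, ⟨?_, ?_⟩, ⟨?_, ?_⟩, ?_, by omega⟩
      · intro hc0
        have h1 := congrFun hc0 p
        have h2 := congrFun hc0 q
        simp only [Pi.zero_apply] at h1 h2
        omega
      · intro i j hij
        have := hcov i j hij
        simp only []
        omega
      · intro hd0
        have h1 := congrFun hd0 p
        have h2 := congrFun hd0 q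
        simp only [Pi.zero_apply] at h1 h2
        omega
      · intro i j hij
        have := hcov i j hij
        simp only []
        omega
      · funext i
        simp only [Pi.add_apply]
        omega
  refine ⟨hk2, fun i₀ => ?_⟩
  by_contra h3
  push_neg at h3
  apply hirred
  refine ⟨fun j => a j - (if j = i₀ then 1 else 0), fun j => if j = i₀ then 1 else 0,
    k, 0, ⟨?_, ?_⟩, ⟨?_, fun i j _ => Nat.zero_le _⟩, ?_, by omega⟩
  · intro hc0
    have h1 := congrFun hc0 i₀
    simp at h1
    omega
  · intro i j hij
    have hsum := hcov i j hij
    have hne : i ≠ j := hij.ne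
    by_cases e1 : i = i₀
    · subst e1
      have h4 : a i ≥ 3 := by omega
      simp [Ne.symm hne]
      omega
    · by_cases e2 : j = i₀
      · subst e2
        have h4 : a j ≥ 3 := by omega
        simp [e1]
        omega
      · simp [e1, e2]
        omega
  · intro hd0
    have h1 := congrFun hd0 i₀
    simp at h1
  · funext j
    simp only [Pi.add_apply]
    by_cases e : j = i₀
    · subst e
      simp
      omega
    · simp [e]
end

section
/- Let G be a finite simple graph on vertex set {x_1,…,x_n} without isolated vertices. If a = (a_1,…,a_n) ∈ ℕ^n is a nonzero irreducible k-cover of G, then k ≤ 2 and the total degree k + a_1 + ⋯ + a_n is at most 2n. (Equivalently, the symbolic Rees algebra of the ideal of vertex covers of G is generated by monomials of degree in t at most two and total degree at most 2n.) -/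
theorem irreducible_cover_total_degree {n : ℕ} (G : SimpleGraph (Fin n))
    (hG : ∀ i : Fin n, ∃ j : Fin n, G.Adj i j)
    (a : Fin n → ℕ) (k : ℕ) (ha : a ≠ 0)
    (h : IsIrredBCover G a k) :
    k ≤ 2 ∧ k + ∑ i : Fin n, a i ≤ 2 * n := by
  obtain ⟨⟨-, hcov⟩, hirr⟩ := h
  -- n is positive
  have hn0 : 0 < n := by
    rcases Nat.eq_zero_or_pos n with h0 | h0
    · exact absurd (funext fun i => absurd i.isLt (by omega)) ha
    · exact h0
  set i0 : Fin n := ⟨0, hn0⟩ with hi0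
  obtain ⟨j0, hj0⟩ := hG i0
  have hne0 : i0 ≠ j0 := G.ne_of_adj hj0
  have hn2 : 2 ≤ n := by
    have h1 : (j0 : ℕ) ≠ 0 := by
      intro hh
      exact hne0 (Fin.ext (by simp [hi0, hh]))
    have := j0.isLt
    omega
  -- Step 1: k ≤ 2
  have hk2 : k ≤ 2 := by
    by_contra hk
    push_neg at hk
    obtain ⟨m, t, hmt⟩ : ∃ m t, (m = 1 ∧ k = 2 * t + 1) ∨ (m = 2 ∧ k = 2 * t) := by
      rcases Nat.even_or_odd k with ⟨t, ht⟩ | ⟨t, ht⟩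
      · exact ⟨2, t, Or.inr ⟨rfl, by omega⟩⟩
      · exact ⟨1, t, Or.inl ⟨rfl, by omega⟩⟩
    set c : Fin n → ℕ := fun i => if 2 * a i < k then 0 else if 2 * a i = k then 1 else m with hc
    have hcle : ∀ i, c i ≤ a i := by
      intro i; simp only [hc]; split_ifs <;> omega
    have hclo : ∀ i j : Fin n, G.Adj i j → m ≤ c i + c j := by
      intro i j hij
      have := hcov i j hij
      simp only [hc]; split_ifs <;> omega
    have hdlo : ∀ i j : Fin n, G.Adj i j → k - m ≤ (a i - c i) + (a j - c j) := by
      intro i j hij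
      have := hcov i j hij
      simp only [hc]; split_ifs <;> omega
    apply hirr
    refine ⟨c, fun i => a i - c i, m, k - m, ⟨?_, hclo⟩, ⟨?_, hdlo⟩, ?_, by omega⟩
    · intro h0
      have h1 := congrFun h0 i0
      have h2 := congrFun h0 j0
      have h3 := hclo i0 j0 hj0
      simp only [Pi.zero_apply] at h1 h2
      omega
    · intro h0
      have h1 := congrFun h0 i0
      have h2 := congrFun h0 j0
      have h3 := hdlo i0 j0 hj0
      simp only [Pi.zero_apply] at h1 h2
      omega
    · funext i
      have := hcle i
      simp only [Pi.add_apply]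
      omega
  -- Step 2: every entry is at most 2
  have ha2 : ∀ p, a p ≤ 2 := by
    intro p
    by_contra hp
    push_neg at hp
    apply hirr
    refine ⟨fun i => if i = p then 1 else 0, fun i => a i - if i = p then 1 else 0, 0, k,
      ⟨?_, fun i j _ => Nat.zero_le _⟩, ⟨?_, ?_⟩, ?_, by omega⟩
    · intro h0
      have h1 := congrFun h0 p
      simp at h1
    · intro h0
      have h1 := congrFun h0 p
      simp at h1
      omega
    · intro i j hij
      have h0 := hcov i j hij
      dsimp only
      by_cases h1 : i = p
      · subst h1
        rw [if_pos rfl]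
        split_ifs <;> omega
      · by_cases h2 : j = p
        · subst h2
          rw [if_neg h1, if_pos rfl]
          omega
        · rw [if_neg h1, if_neg h2]
          omega
    · funext i
      simp only [Pi.add_apply]
      split_ifs with h1
      · subst h1; omega
      · omega
  -- sum identity
  have hsum : (∑ i : Fin n, a i) + (∑ i : Fin n, (2 - a i)) = 2 * n := by
    rw [← Finset.sum_add_distrib]
    rw [Finset.sum_congr rfl (fun i _ => (by have := ha2 i; omega : a i + (2 - a i) = 2))]
    simp [Finset.card_univ, mul_comm]
  refine ⟨hk2, ?_⟩
  by_contra hbig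
  push_neg at hbig
  interval_cases k
  · omega
  · -- k = 1 : all entries equal 2, so a = 1 + 1
    have hB : ∑ i : Fin n, (2 - a i) = 0 := by omega
    have hall : ∀ i, a i = 2 := by
      intro i
      have h1 := (Finset.sum_eq_zero_iff.mp hB) i (Finset.mem_univ i)
      have h1' : 2 - a i = 0 := h1
      have h2 := ha2 i
      omega
    apply hirr
    refine ⟨fun _ => 1, fun _ => 1, 1, 0, ⟨?_, fun i j _ => by show (1:ℕ) ≤ 1 + 1; omega⟩,
      ⟨?_, fun i j _ => Nat.zero_le _⟩, ?_, rfl⟩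
    · intro h0; have h1 := congrFun h0 i0; simp at h1
    · intro h0; have h1 := congrFun h0 i0; simp at h1
    · funext i
      have := hall i
      show a i = 1 + 1
      omega
  · -- k = 2 : sum ≥ 2n - 1
    have hpos : ∀ q, 1 ≤ a q := by
      intro q
      by_contra hq
      push_neg at hq
      have hle : 2 - a q ≤ ∑ i : Fin n, (2 - a i) :=
        Finset.single_le_sum (f := fun i => 2 - a i) (fun i _ => Nat.zero_le _)
          (Finset.mem_univ q)
      omega
    have hno11 : ∀ i j : Fin n, G.Adj i j → 3 ≤ a i + a j := by
      intro i j hij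
      have hij' : i ≠ j := hij.ne
      have hle : (2 - a i) + (2 - a j) ≤ ∑ x : Fin n, (2 - a x) := by
        have h1 := Finset.sum_le_sum_of_subset (f := fun x => 2 - a x)
          (Finset.subset_univ ({i, j} : Finset (Fin n)))
        rwa [Finset.sum_pair hij'] at h1
      have h2 := hcov i j hij
      have h3 := ha2 i
      have h4 := ha2 j
      omega
    have hq2 : ∃ q, a q = 2 := by
      by_contra hq
      push_neg at hq
      have h1 : ∑ i : Fin n, a i ≤ Finset.univ.card • 1 :=
        Finset.sum_le_card_nsmul Finset.univ a 1
          (fun i _ => by have := hq i; have := ha2 i; omega)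
      simp [Finset.card_univ] at h1
      omega
    obtain ⟨q, hq⟩ := hq2
    apply hirr
    refine ⟨fun _ => 1, fun i => a i - 1, 1, 1,
      ⟨?_, fun i j _ => by show (1:ℕ) ≤ 1 + 1; omega⟩, ⟨?_, ?_⟩, ?_, rfl⟩
    · intro h0; have h1 := congrFun h0 i0; simp at h1
    · intro h0
      have h1 := congrFun h0 q
      simp only [Pi.zero_apply] at h1
      omega
    · intro i j hij
      have h1 := hno11 i j hij
      have h2 := hpos i
      have h3 := hpos j
      show 1 ≤ a i - 1 + (a j - 1)
      omega
    · funext i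
      have := hpos i
      show a i = 1 + (a i - 1)
      omega
end

section
/- Let G be a finite simple graph on vertex set {x_1,…,x_n} without isolated vertices. The all-ones vector a = (1,…,1) ∈ ℕ^n is an irreducible 2-cover of G if and only if G is not bipartite. -/
/-- A graph is bipartite if its vertices can be 2-coloured so that adjacent
vertices get distinct colours. -/
def IsBipartite {n : ℕ} (G : SimpleGraph (Fin n)) : Prop :=
  ∃ f : Fin n → Bool, ∀ i j : Fin n, G.Adj i j → f i ≠ f j

theorem allOnes_irreducible_two_cover_iff_nonbipartite {n : ℕ} (G : SimpleGraph (Fin n))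
    (hG : ∀ i : Fin n, ∃ j : Fin n, G.Adj i j) :
    IsIrredBCover G (fun _ => 1) 2 ↔ ¬ IsBipartite G := by
  constructor
  · rintro ⟨⟨hne, -⟩, hirr⟩ ⟨f, hf⟩
    have hn : n ≠ 0 := by
      rintro rfl
      exact hne (funext fun i => i.elim0)
    obtain ⟨v⟩ := Fin.pos_iff_nonempty.mp (Nat.pos_of_ne_zero hn)
    obtain ⟨w, hvw⟩ := hG v
    have hfvw := hf v w hvw
    apply hirr
    refine ⟨fun k => if f k then 1 else 0, fun k => if f k then 0 else 1, 1, 1,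
      ⟨?_, ?_⟩, ⟨?_, ?_⟩, ?_, rfl⟩
    · intro h
      rcases Bool.eq_false_or_eq_true (f v) with hv | hv
      · have := congrFun h v
        simp [hv] at this
      · have hw : f w = true := by
          cases hfw : f w
          · exact absurd (hv.trans hfw.symm) hfvw
          · rfl
        have := congrFun h w
        simp [hw] at this
    · intro k l hkl
      have := hf k l hkl
      cases hk : f k <;> cases hl : f l <;> simp_all
    · intro h
      rcases Bool.eq_false_or_eq_true (f v) with hv | hv
      · have hw : f w = false := by
          cases hfw : f w
          · rfl
          · exact absurd (hv.trans hfw.symm) hfvw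
        have := congrFun h w
        simp [hw] at this
      · have := congrFun h v
        simp [hv] at this
    · intro k l hkl
      have := hf k l hkl
      cases hk : f k <;> cases hl : f l <;> simp_all
    · funext k
      cases hk : f k <;> simp [hk]
  · intro hnb
    have hn : n ≠ 0 := by
      rintro rfl
      exact hnb ⟨fun _ => true, fun i => i.elim0⟩
    obtain ⟨v⟩ := Fin.pos_iff_nonempty.mp (Nat.pos_of_ne_zero hn)
    refine ⟨⟨?_, fun i j _ => le_refl 2⟩, ?_⟩
    · intro h
      have := congrFun h v
      simp at this
    · rintro ⟨c, d, i, j, ⟨hc0, hc⟩, ⟨hd0, hd⟩, hsum, hij⟩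
      have hs : ∀ k, c k + d k = 1 := fun k => (congrFun hsum k).symm
      have hcases : i = 0 ∧ j = 2 ∨ i = 1 ∧ j = 1 ∨ i = 2 ∧ j = 0 := by omega
      rcases hcases with ⟨hi, hj⟩ | ⟨hi, hj⟩ | ⟨hi, hj⟩ <;> subst hi <;> subst hj
      · obtain ⟨m, hm⟩ := Function.ne_iff.mp hc0
        obtain ⟨l, hml⟩ := hG m
        have h1 := hd m l hml
        have h2 := hs m
        have h3 := hs l
        simp only [Pi.zero_apply] at hm
        omega
      · apply hnb
        refine ⟨fun k => decide (c k = 0), ?_⟩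
        intro k l hkl h
        simp only [decide_eq_decide] at h
        have h1 := hc k l hkl
        have h2 := hd k l hkl
        have h3 := hs k
        have h4 := hs l
        omega
      · obtain ⟨m, hm⟩ := Function.ne_iff.mp hd0
        obtain ⟨l, hml⟩ := hG m
        have h1 := hc m l hml
        have h2 := hs m
        have h3 := hs l
        simp only [Pi.zero_apply] at hm
        omega
end

section
/- Let G be a finite simple bipartite graph on vertex set {x_1,…,x_n} without isolated vertices, let 0 ≠ a = (a_1,…,a_n) ∈ ℕ^n and b ∈ ℕ. Then a is an irreducible b-cover of G if and only if either b = 0 and a = e_i (the i-th unit vector) for some 1 ≤ i ≤ n, or b = 1 and a = ∑_{x_i ∈ C} e_i for some minimal vertex cover C of G. -/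
/-- `C` is a vertex cover of `G`: every edge has an endpoint in `C`. -/
def IsVC {n : ℕ} (G : SimpleGraph (Fin n)) (C : Finset (Fin n)) : Prop :=
  ∀ i j : Fin n, G.Adj i j → i ∈ C ∨ j ∈ C

/-- `C` is a minimal vertex cover of `G`. -/
def IsMinVC {n : ℕ} (G : SimpleGraph (Fin n)) (C : Finset (Fin n)) : Prop :=
  IsVC G C ∧ ∀ D : Finset (Fin n), D ⊂ C → ¬ IsVC G D

lemma aux_exists_edge {n : ℕ} (G : SimpleGraph (Fin n))
    (hG : ∀ i : Fin n, ∃ j : Fin n, G.Adj i j)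
    (a : Fin n → ℕ) (ha : a ≠ 0) : ∃ i j, G.Adj i j := by
  obtain ⟨i, -⟩ := Function.ne_iff.mp ha
  obtain ⟨j, hj⟩ := hG i
  exact ⟨i, j, hj⟩

/-- If `C` is a minimal vertex cover, its indicator cannot split as a
(nonzero) 1-cover plus a nonzero 0-cover. -/
lemma aux_no_split {n : ℕ} {G : SimpleGraph (Fin n)} {C : Finset (Fin n)}
    (hC : IsMinVC G C) (c d : Fin n → ℕ)
    (hc : IsBCover G c 1) (hd : IsBCover G d 0)
    (heq : (fun i => if i ∈ C then (1:ℕ) else 0) = c + d) : False := by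
  have hsum : ∀ k, c k + d k = (if k ∈ C then (1:ℕ) else 0) := by
    intro k
    have := congrFun heq k
    simpa using this.symm
  set S := Finset.univ.filter (fun k => c k ≠ 0) with hS
  have hSC : S ⊆ C := by
    intro k hk
    simp only [hS, Finset.mem_filter, Finset.mem_univ, true_and] at hk
    by_contra h
    have := hsum k
    simp only [h, if_false] at this
    omega
  have hSvc : IsVC G S := by
    intro i j hij
    have h1 := hc.2 i j hij
    simp only [hS, Finset.mem_filter, Finset.mem_univ, true_and]
    omega
  obtain ⟨k, hk⟩ := Function.ne_iff.mp hd.1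
  have hk' : d k ≠ 0 := by simpa using hk
  have hkC : k ∈ C := by
    by_contra h
    have := hsum k
    simp only [h, if_false] at this
    omega
  have hkS : k ∉ S := by
    have := hsum k
    simp only [hkC, if_true] at this
    simp only [hS, Finset.mem_filter, Finset.mem_univ, true_and, not_not]
    omega
  exact hC.2 S ((Finset.ssubset_iff_of_subset hSC).mpr ⟨k, hkC, hkS⟩) hSvc

theorem irreducible_covers_of_bipartite {n : ℕ} (G : SimpleGraph (Fin n))
    (hG : ∀ i : Fin n, ∃ j : Fin n, G.Adj i j)
    (hbip : IsBipartite G)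
    (a : Fin n → ℕ) (b : ℕ) (ha : a ≠ 0) :
    IsIrredBCover G a b ↔
      (b = 0 ∧ ∃ i : Fin n, a = Pi.single i 1) ∨
      (b = 1 ∧ ∃ C : Finset (Fin n), IsMinVC G C ∧
        a = fun i => if i ∈ C then 1 else 0) := by
  obtain ⟨e₁, e₂, hedge⟩ := aux_exists_edge G hG a ha
  constructor
  · rintro ⟨⟨-, hcov⟩, hirr⟩
    match b with
    | 0 =>
      left
      refine ⟨rfl, ?_⟩
      obtain ⟨i, hi⟩ := Function.ne_iff.mp ha
      have hi' : a i ≠ 0 := by simpa using hi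
      refine ⟨i, ?_⟩
      set s : Fin n → ℕ := fun k => if k = i then 1 else 0 with hs
      set d : Fin n → ℕ := fun k => a k - s k with hd
      by_cases hdz : d = 0
      · funext k
        have hk := congrFun hdz k
        simp only [hd, hs, Pi.zero_apply] at hk
        rw [Pi.single_apply]
        rcases eq_or_ne k i with rfl | hne
        · simp at hk ⊢; omega
        · rw [if_neg hne] at hk ⊢; omega
      · exfalso
        apply hirr
        refine ⟨s, d, 0, 0, ⟨?_, fun _ _ _ => Nat.zero_le _⟩,
          ⟨hdz, fun _ _ _ => Nat.zero_le _⟩, ?_, rfl⟩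
        · intro h
          have := congrFun h i
          simp [hs] at this
        · funext k
          simp only [Pi.add_apply, hd, hs]
          rcases eq_or_ne k i with rfl | hne
          · simp; omega
          · rw [if_neg hne]; omega
    | 1 =>
      right
      refine ⟨rfl, ?_⟩
      -- first: all entries of a are ≤ 1
      have hle : ∀ k, a k ≤ 1 := by
        intro k
        by_contra h
        push_neg at h
        apply hirr
        set s : Fin n → ℕ := fun l => if l = k then 1 else 0 with hs
        set d : Fin n → ℕ := fun l => a l - s l with hd
        refine ⟨s, d, 0, 1, ⟨?_, fun _ _ _ => Nat.zero_le _⟩,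
          ⟨?_, ?_⟩, ?_, rfl⟩
        · intro hz
          have := congrFun hz k
          simp [hs] at this
        · intro hz
          have := congrFun hz k
          simp [hd, hs] at this
          omega
        · intro u v huv
          have h1 := hcov u v huv
          have hne : u ≠ v := huv.ne
          simp only [hd, hs]
          rcases eq_or_ne u k with rfl | huk
          · rw [if_pos rfl, if_neg (Ne.symm hne)]; omega
          · rcases eq_or_ne v k with rfl | hvk
            · rw [if_pos rfl, if_neg hne]; omega
            · rw [if_neg huk, if_neg hvk]; omega
        · funext l
          simp only [Pi.add_apply, hd, hs]
          rcases eq_or_ne l k with rfl | hne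
          · simp; omega
          · rw [if_neg hne]; omega
      set C := Finset.univ.filter (fun k => a k ≠ 0) with hC
      have haC : a = fun i => if i ∈ C then 1 else 0 := by
        funext k
        simp only [hC, Finset.mem_filter, Finset.mem_univ, true_and]
        have := hle k
        rcases Nat.eq_zero_or_pos (a k) with h0 | h1
        · simp [h0]
        · have h2 : a k = 1 := by omega
          simp [h2]
      refine ⟨C, ⟨?_, ?_⟩, haC⟩
      · intro i j hij
        have := hcov i j hij
        simp only [hC, Finset.mem_filter, Finset.mem_univ, true_and]
        omega
      · intro D hD hDvc
        apply hirr
        set c : Fin n → ℕ := fun k => if k ∈ D then 1 else 0 with hc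
        set d : Fin n → ℕ := fun k => a k - c k with hd
        have hDC : D ⊆ C := hD.subset
        obtain ⟨k₀, hk₀C, hk₀D⟩ := (Finset.ssubset_iff_of_subset hDC).mp hD
        have hk₀a : a k₀ ≠ 0 := by
          simpa only [hC, Finset.mem_filter, Finset.mem_univ, true_and] using hk₀C
        refine ⟨c, d, 1, 0, ⟨?_, ?_⟩, ⟨?_, fun _ _ _ => Nat.zero_le _⟩, ?_, rfl⟩
        · -- c nonzero: D is nonempty since there is an edge
          obtain ⟨w, hw⟩ : ∃ w, w ∈ D := by
            rcases hDvc e₁ e₂ hedge with h | h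
            exacts [⟨e₁, h⟩, ⟨e₂, h⟩]
          intro hz
          have := congrFun hz w
          simp [hc, hw] at this
        · intro i j hij
          rcases hDvc i j hij with h | h <;> simp [hc, h]
        · -- d nonzero: d k₀ = a k₀ ≥ 1
          intro hz
          have := congrFun hz k₀
          simp only [hd, hc, if_neg hk₀D, Pi.zero_apply] at this
          omega
        · funext l
          simp only [Pi.add_apply, hd, hc]
          by_cases hlD : l ∈ D
          · have hlC : l ∈ C := hDC hlD
            have hla : a l ≠ 0 := by
              simpa only [hC, Finset.mem_filter, Finset.mem_univ, true_and] using hlC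
            rw [if_pos hlD]
            omega
          · rw [if_neg hlD]
            omega
    | (m + 2) =>
      exfalso
      obtain ⟨f, hf⟩ := hbip
      apply hirr
      set c : Fin n → ℕ :=
        fun i => if f i = true then (if a i = 0 then 0 else 1) else a i - (m + 1) with hc
      set d : Fin n → ℕ := fun i => a i - c i with hd
      have hcases : ∀ u v : Fin n, G.Adj u v →
          (f u = true ∧ f v = false) ∨ (f u = false ∧ f v = true) := by
        intro u v huv
        have := hf u v huv
        cases h1 : f u <;> cases h2 : f v <;> simp_all
      have hcle : ∀ i, c i ≤ a i := by
        intro i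
        simp only [hc]
        split_ifs <;> omega
      refine ⟨c, d, 1, m + 1, ⟨?_, ?_⟩, ⟨?_, ?_⟩, ?_, by omega⟩
      · -- c ≠ 0
        intro hz
        have g1 := congrFun hz e₁
        have g2 := congrFun hz e₂
        have hcov' := hcov e₁ e₂ hedge
        simp only [hc, Pi.zero_apply] at g1 g2
        rcases hcases e₁ e₂ hedge with ⟨h1, h2⟩ | ⟨h1, h2⟩ <;>
          simp [h1, h2] at g1 g2 <;>
          first
            | omega
            | (split_ifs at g1 g2 <;> omega)
      · -- c is a 1-cover
        intro u v huv
        have hcov' := hcov u v huv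
        simp only [hc]
        rcases hcases u v huv with ⟨h1, h2⟩ | ⟨h1, h2⟩ <;>
          simp [h1, h2] <;>
          first
            | omega
            | (split_ifs <;> omega)
      · -- d ≠ 0
        intro hz
        have g1 := congrFun hz e₁
        have g2 := congrFun hz e₂
        have hcov' := hcov e₁ e₂ hedge
        simp only [hd, hc, Pi.zero_apply] at g1 g2
        rcases hcases e₁ e₂ hedge with ⟨h1, h2⟩ | ⟨h1, h2⟩ <;>
          simp [h1, h2] at g1 g2 <;>
          first
            | omega
            | (split_ifs at g1 g2 <;> omega)
      · -- d is an (m+1)-cover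
        intro u v huv
        have hcov' := hcov u v huv
        simp only [hd, hc]
        rcases hcases u v huv with ⟨h1, h2⟩ | ⟨h1, h2⟩ <;>
          simp [h1, h2] <;>
          first
            | omega
            | (split_ifs <;> omega)
      · funext l
        simp only [Pi.add_apply, hd]
        have := hcle l
        omega
  · rintro (⟨rfl, i, rfl⟩ | ⟨rfl, C, hC, rfl⟩)
    · refine ⟨⟨ha, fun _ _ _ => Nat.zero_le _⟩, ?_⟩
      rintro ⟨c, d, p, q, hc, hd, heq, -⟩
      obtain ⟨k, hk⟩ := Function.ne_iff.mp hc.1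
      obtain ⟨l, hl⟩ := Function.ne_iff.mp hd.1
      have hk' : c k ≠ 0 := by simpa using hk
      have hl' : d l ≠ 0 := by simpa using hl
      have hsk := congrFun heq k
      have hsl := congrFun heq l
      simp only [Pi.add_apply, Pi.single_apply] at hsk hsl
      rcases eq_or_ne k i with rfl | hki
      · rcases eq_or_ne l k with rfl | hlk
        · simp at hsk hsl; omega
        · rw [if_neg hlk] at hsl; omega
      · rw [if_neg hki] at hsk; omega
    · refine ⟨⟨ha, ?_⟩, ?_⟩
      · intro i j hij
        rcases hC.1 i j hij with h | h <;> simp [h]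
      · rintro ⟨c, d, p, q, hc, hd, heq, hpq⟩
        have hpq' : (p = 1 ∧ q = 0) ∨ (p = 0 ∧ q = 1) := by omega
        rcases hpq' with ⟨rfl, rfl⟩ | ⟨rfl, rfl⟩
        · exact aux_no_split hC c d hc hd heq
        · exact aux_no_split hC d c hd hc (heq.trans (add_comm c d))
end

section
/- Let G be a finite simple non-bipartite graph on vertex set V = {x_1,…,x_n} without isolated vertices, let 0 ≠ a = (a_1,…,a_n) ∈ ℕ^n and b ∈ ℕ. Then a is an irreducible b-cover of G if and only if one of the following holds: (a) b = 0 and a = e_i (the i-th unit vector) for some 1 ≤ i ≤ n; (b) b = 1 and a = ∑_{x_i ∈ C} e_i for some minimal vertex cover C of G; (c) b = 2 and a = (1,…,1); (d) b = 2 and there is a nonempty independent set of vertices A of G such that: a_i = 0 for x_i ∈ A, a_i = 2 for x_i ∈ N_G(A), a_i = 1 for x_i ∈ V \ (A ∪ N_G(A)); N_G(A) is not a vertex cover of G; V ≠ A ∪ N_G(A); and the induced subgraph on V \ (A ∪ N_G(A)) has no isolated vertices and is not bipartite. -/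
/-- The neighbour set `N_G(A)` of a set of vertices `A`. -/
def NbhdSet {n : ℕ} (G : SimpleGraph (Fin n)) (A : Set (Fin n)) : Set (Fin n) :=
  {v | ∃ u ∈ A, G.Adj u v}

section Aux
variable {n : ℕ} {G : SimpleGraph (Fin n)}

lemma exists_ne_zero {a : Fin n → ℕ} (ha : a ≠ 0) : ∃ i, a i ≠ 0 := Function.ne_iff.mp ha

lemma fwd0 {a : Fin n → ℕ} (h : IsIrredBCover G a 0) :
    ∃ i : Fin n, a = Pi.single i 1 := by
  classical
  obtain ⟨⟨ha, -⟩, hirr⟩ := h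
  obtain ⟨i, hi⟩ := exists_ne_zero ha
  have hi1 : 1 ≤ a i := Nat.one_le_iff_ne_zero.mpr hi
  refine ⟨i, ?_⟩
  by_contra hne
  apply hirr
  refine ⟨Pi.single i 1, fun j => a j - (Pi.single i 1 : Fin n → ℕ) j, 0, 0,
    ⟨?_, fun _ _ _ => Nat.zero_le _⟩, ⟨?_, fun _ _ _ => Nat.zero_le _⟩, ?_, rfl⟩
  · intro h0; have := congrFun h0 i; simp at this
  · intro h0
    apply hne
    funext j
    have hj := congrFun h0 j
    simp only [Pi.zero_apply] at hj
    by_cases hji : j = i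
    · subst hji; simp [Pi.single_apply] at hj ⊢; omega
    · simp only [Pi.single_apply, if_neg hji] at hj ⊢; omega
  · funext j
    simp only [Pi.add_apply]
    by_cases hji : j = i
    · subst hji; simp [Pi.single_apply]; omega
    · simp only [Pi.single_apply, if_neg hji]; omega

lemma fwd1 (hG : ∀ i : Fin n, ∃ j, G.Adj i j) {a : Fin n → ℕ}
    (h : IsIrredBCover G a 1) :
    ∃ C : Finset (Fin n), IsMinVC G C ∧ a = fun i => if i ∈ C then 1 else 0 := by
  classical
  obtain ⟨⟨ha, hcov⟩, hirr⟩ := h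
  set C : Finset (Fin n) := Finset.univ.filter (fun i => a i ≠ 0) with hC
  have hmemC : ∀ i, i ∈ C ↔ a i ≠ 0 := by intro i; simp [hC]
  have hind : a = fun i => if i ∈ C then 1 else 0 := by
    by_contra hne
    apply hirr
    refine ⟨fun i => if i ∈ C then 1 else 0, fun i => a i - (if i ∈ C then 1 else 0), 1, 0,
      ⟨?_, ?_⟩, ⟨?_, fun _ _ _ => Nat.zero_le _⟩, ?_, rfl⟩
    · obtain ⟨i, hi⟩ := exists_ne_zero ha
      intro h0; have := congrFun h0 i
      simp [hmemC, hi] at this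
    · intro i j hij
      have hc := hcov i j hij
      by_cases h1 : a i = 0
      · have h2 : a j ≠ 0 := by omega
        simp [hmemC, h1, h2]
      · simp [hmemC, h1]
    · intro h0
      apply hne; funext i
      have hx := congrFun h0 i
      simp only [Pi.zero_apply] at hx
      by_cases h1 : a i = 0 <;> simp only [hmemC, h1, ne_eq, not_true_eq_false,
        not_false_eq_true, if_true, if_false, ite_true, ite_false] at hx ⊢ <;> omega
    · funext i
      simp only [Pi.add_apply]
      by_cases h1 : a i = 0 <;> simp [hmemC, h1] <;> omega
  refine ⟨C, ⟨?_, ?_⟩, hind⟩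
  · intro i j hij; have := hcov i j hij
    rw [hmemC, hmemC]; omega
  · rintro D hD hDvc
    apply hirr
    obtain ⟨k, hkC, hkD⟩ := Finset.exists_of_ssubset hD
    have hkC' : a k ≠ 0 := (hmemC k).mp hkC
    refine ⟨fun i => if i ∈ D then 1 else 0, fun i => a i - (if i ∈ D then 1 else 0), 1, 0,
      ⟨?_, ?_⟩, ⟨?_, fun _ _ _ => Nat.zero_le _⟩, ?_, rfl⟩
    · obtain ⟨i, hi⟩ := exists_ne_zero ha
      obtain ⟨j, hij⟩ := hG i
      rcases hDvc i j hij with hm | hm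
      · intro h0; have := congrFun h0 i; simp [hm] at this
      · intro h0; have := congrFun h0 j; simp [hm] at this
    · intro i j hij; rcases hDvc i j hij with hm | hm <;> simp [hm]
    · intro h0; have := congrFun h0 k
      simp [hkD] at this; omega
    · funext i
      simp only [Pi.add_apply]
      by_cases h1 : i ∈ D
      · have h2 : a i ≠ 0 := (hmemC i).mp (hD.1 h1)
        simp [h1]; omega
      · simp [h1]

lemma fwd_ge3 (hG : ∀ i : Fin n, ∃ j, G.Adj i j) {a : Fin n → ℕ} {b : ℕ} (hb : 3 ≤ b)
    (h : IsBCover G a b) :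
    ∃ c d i j, IsBCover G c i ∧ IsBCover G d j ∧ a = c + d ∧ b = i + j := by
  classical
  obtain ⟨ha, hcov⟩ := h
  set d : Fin n → ℕ := fun i => if a i = 0 then 0 else if b ≤ a i then 2 else 1 with hd
  have hdle : ∀ i, d i ≤ a i := by intro i; simp only [hd]; split_ifs <;> omega
  refine ⟨fun i => a i - d i, d, b - 2, 2, ⟨?_, ?_⟩, ⟨?_, ?_⟩, ?_, by omega⟩
  · intro h0
    obtain ⟨i, hi⟩ := exists_ne_zero ha
    obtain ⟨j, hij⟩ := hG i
    have h1 := congrFun h0 i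
    have h2 := congrFun h0 j
    have hc := hcov i j hij
    simp only [Pi.zero_apply, hd] at h1 h2
    split_ifs at h1 h2 <;> omega
  · intro i j hij
    have hc := hcov i j hij
    simp only [hd]
    split_ifs <;> omega
  · obtain ⟨i, hi⟩ := exists_ne_zero ha
    intro h0; have := congrFun h0 i
    simp only [Pi.zero_apply, hd] at this
    split_ifs at this <;> omega
  · intro i j hij
    have hc := hcov i j hij
    simp only [hd]
    split_ifs <;> omega
  · funext i
    have := hdle i
    simp only [Pi.add_apply]; omega

lemma fwd2 (hG : ∀ i : Fin n, ∃ j, G.Adj i j) {a : Fin n → ℕ}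
    (h : IsIrredBCover G a 2) :
    (a = fun _ => 1) ∨
    (∃ A : Set (Fin n), A.Nonempty ∧
        (∀ u ∈ A, ∀ w ∈ A, ¬ G.Adj u w) ∧
        (∀ i ∈ A, a i = 0) ∧
        (∀ i ∈ NbhdSet G A, a i = 2) ∧
        (∀ i : Fin n, i ∉ A → i ∉ NbhdSet G A → a i = 1) ∧
        (∃ i j : Fin n, G.Adj i j ∧ i ∉ NbhdSet G A ∧ j ∉ NbhdSet G A) ∧
        (Set.univ : Set (Fin n)) ≠ A ∪ NbhdSet G A ∧
        (∀ v : Fin n, v ∉ A ∪ NbhdSet G A →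
          ∃ u : Fin n, u ∉ A ∪ NbhdSet G A ∧ G.Adj v u) ∧
        ¬ ∃ f : Fin n → Bool, ∀ i j : Fin n,
            i ∉ A ∪ NbhdSet G A → j ∉ A ∪ NbhdSet G A → G.Adj i j → f i ≠ f j) := by
  classical
  obtain ⟨⟨ha, hcov⟩, hirr⟩ := h
  by_cases hz : ∃ i, a i = 0
  case neg =>
    left
    push_neg at hz
    by_contra hne
    apply hirr
    obtain ⟨i, hi⟩ := exists_ne_zero ha
    refine ⟨fun _ => 1, fun i => a i - 1, 2, 0, ⟨?_, ?_⟩,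
      ⟨?_, fun _ _ _ => Nat.zero_le _⟩, ?_, rfl⟩
    · intro h0; have := congrFun h0 i; simp at this
    · intro i j _; show 2 ≤ 1 + 1; omega
    · intro h0; apply hne; funext j
      have h1 : a j - 1 = 0 := congrFun h0 j
      have h2 := hz j
      show a j = 1
      omega
    · funext j
      have h2 := hz j
      show a j = 1 + (a j - 1)
      omega
  case pos =>
    right
    obtain ⟨i₀, hi₀⟩ := hz
    set A : Set (Fin n) := {i | a i = 0} with hA
    have hNA : ∀ v, v ∈ NbhdSet G A ↔ ∃ u, a u = 0 ∧ G.Adj u v := fun v => Iff.rfl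
    have hge2 : ∀ v ∈ NbhdSet G A, 2 ≤ a v := by
      intro v hv
      obtain ⟨u, hu, huv⟩ := (hNA v).mp hv
      have := hcov u v huv; omega
    have hindep : ∀ u ∈ A, ∀ w ∈ A, ¬ G.Adj u w := by
      intro u hu w hw hadj
      have h1 : a u = 0 := hu
      have h2 : a w = 0 := hw
      have := hcov u w hadj; omega
    obtain ⟨w₀, hw₀adj⟩ := hG i₀
    have hw₀N : w₀ ∈ NbhdSet G A := (hNA w₀).mpr ⟨i₀, hi₀, hw₀adj⟩
    have hw₀2 : 2 ≤ a w₀ := hge2 w₀ hw₀N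
    -- the pattern vector
    set p : Fin n → ℕ := fun i => if a i = 0 then 0 else if i ∈ NbhdSet G A then 2 else 1
      with hp
    have hple : ∀ i, p i ≤ a i := by
      intro i; simp only [hp]
      split_ifs with h1 h2
      · omega
      · exact hge2 i h2
      · omega
    have hpcov : ∀ i j, G.Adj i j → 2 ≤ p i + p j := by
      intro i j hij
      have hc := hcov i j hij
      simp only [hp]
      by_cases h1 : a i = 0
      · have hjN : j ∈ NbhdSet G A := (hNA j).mpr ⟨i, h1, hij⟩
        have h2 : ¬ a j = 0 := by omega
        simp [h1, h2, hjN]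
      · by_cases h2 : a j = 0
        · have hiN : i ∈ NbhdSet G A := (hNA i).mpr ⟨j, h2, hij.symm⟩
          simp [h1, h2, hiN]
        · simp only [if_neg h1, if_neg h2]
          split_ifs <;> omega
    have hap : a = p := by
      by_contra hne
      apply hirr
      refine ⟨p, fun i => a i - p i, 2, 0, ⟨?_, hpcov⟩,
        ⟨?_, fun _ _ _ => Nat.zero_le _⟩, ?_, rfl⟩
      · intro h0; have := congrFun h0 w₀
        have h2 : ¬ a w₀ = 0 := by omega
        simp [hp, h2, hw₀N] at this
      · intro h0; apply hne; funext i
        have h1 : a i - p i = 0 := congrFun h0 i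
        have h2 := hple i
        omega
      · funext i
        show a i = p i + (a i - p i)
        have := hple i; omega
    have hA0 : ∀ i ∈ A, a i = 0 := fun i hi => hi
    have hN2 : ∀ i ∈ NbhdSet G A, a i = 2 := by
      intro i hi
      have h2 := hge2 i hi
      have h3 := congrFun hap i
      have h1 : ¬ a i = 0 := by omega
      simp only [hp, if_neg h1, if_pos hi] at h3
      exact h3
    have hB1 : ∀ i : Fin n, i ∉ A → i ∉ NbhdSet G A → a i = 1 := by
      intro i h1 h2
      have h1' : ¬ a i = 0 := h1
      have h3 := congrFun hap i
      simp only [hp, if_neg h1', if_neg h2] at h3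
      exact h3
    -- notA→ values, and q = indicator of N(A)
    set q : Fin n → ℕ := fun i => if i ∈ NbhdSet G A then 1 else 0 with hq
    have hq0 : q ≠ 0 := by
      intro h0; have := congrFun h0 w₀; simp [hq, hw₀N] at this
    have hqle : ∀ i, q i ≤ a i := by
      intro i; simp only [hq]
      split_ifs with h1
      · have := hN2 i h1; omega
      · omega
    have hr1 : ∀ i, a i ≠ 0 → 1 ≤ a i - q i := by
      intro i hi; simp only [hq]
      split_ifs with h1
      · have := hN2 i h1; omega
      · omega
    -- (d₁a)
    have hd1a : ∃ i j, G.Adj i j ∧ i ∉ NbhdSet G A ∧ j ∉ NbhdSet G A := by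
      by_contra hno
      push_neg at hno
      apply hirr
      refine ⟨q, fun i => a i - q i, 1, 1, ⟨hq0, ?_⟩, ⟨?_, ?_⟩, ?_, rfl⟩
      · intro i j hij
        by_cases hiN : i ∈ NbhdSet G A
        · simp [hq, hiN]
        · have hjN := hno i j hij hiN; simp [hq, hjN]
      · intro h0
        have h1 : a w₀ - q w₀ = 0 := congrFun h0 w₀
        have h2 := hN2 w₀ hw₀N
        have h3 : q w₀ = 1 := by simp [hq, hw₀N]
        omega
      · intro i j hij
        show 1 ≤ (a i - q i) + (a j - q j)
        have hc := hcov i j hij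
        by_cases h1 : a i = 0
        · have hjN : j ∈ NbhdSet G A := (hNA j).mpr ⟨i, h1, hij⟩
          have := hr1 j (by have := hN2 j hjN; omega)
          omega
        · have := hr1 i h1; omega
      · funext i
        show a i = q i + (a i - q i)
        have := hqle i; omega
    -- (d₁b)
    have hd1b : (Set.univ : Set (Fin n)) ≠ A ∪ NbhdSet G A := by
      intro heq
      apply hirr
      have hqcov : ∀ i j, G.Adj i j → 1 ≤ q i + q j := by
        intro i j hij
        by_cases hiN : i ∈ NbhdSet G A
        · simp [hq, hiN]
        · by_cases hiA : i ∈ A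
          · have hjN : j ∈ NbhdSet G A := (hNA j).mpr ⟨i, hiA, hij⟩
            simp [hq, hjN]
          · exfalso
            have : i ∈ A ∪ NbhdSet G A := heq ▸ Set.mem_univ i
            rcases this with h | h
            · exact hiA h
            · exact hiN h
      refine ⟨q, q, 1, 1, ⟨hq0, hqcov⟩, ⟨hq0, hqcov⟩, ?_, rfl⟩
      funext i
      simp only [Pi.add_apply]
      have : i ∈ A ∪ NbhdSet G A := heq ▸ Set.mem_univ i
      rcases this with h | h
      · have h1 := hA0 i h
        have : i ∉ NbhdSet G A := by
          intro hN; have := hN2 i hN; omega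
        simp [hq, this, h1]
      · have h1 := hN2 i h
        simp [hq, h, h1]
    -- (d₂a)
    have hd2a : ∀ v : Fin n, v ∉ A ∪ NbhdSet G A →
        ∃ u : Fin n, u ∉ A ∪ NbhdSet G A ∧ G.Adj v u := by
      intro v hv
      rw [Set.mem_union] at hv
      push_neg at hv
      obtain ⟨hvA, hvN⟩ := hv
      have hav : a v = 1 := hB1 v hvA hvN
      by_contra hno
      push_neg at hno
      have hnb : ∀ u, G.Adj v u → u ∈ NbhdSet G A := by
        intro u hu
        by_cases huA : u ∈ A
        · exact absurd ((hNA v).mpr ⟨u, huA, hu.symm⟩) hvN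
        · by_cases huN : u ∈ NbhdSet G A
          · exact huN
          · exact absurd hu (hno u (by rw [Set.mem_union]; tauto))
      apply hirr
      obtain ⟨w, hw⟩ := hG v
      have hwN := hnb w hw
      have hw2 := hN2 w hwN
      refine ⟨fun i => a i - (if i = v then 1 else 0), fun i => if i = v then 1 else 0, 2, 0,
        ⟨?_, ?_⟩, ⟨?_, fun _ _ _ => Nat.zero_le _⟩, ?_, rfl⟩
      · intro h0
        have h1 : a w - (if w = v then 1 else 0) = 0 := congrFun h0 w
        rw [if_neg hw.ne'] at h1
        omega
      · intro i j hij
        show 2 ≤ (a i - (if i = v then 1 else 0)) + (a j - (if j = v then 1 else 0))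
        have hc := hcov i j hij
        by_cases h1 : i = v
        · have hjv : ¬ j = v := by
            rintro rfl; exact G.irrefl (h1 ▸ hij)
          have h2 := hN2 j (hnb j (h1 ▸ hij))
          rw [if_pos h1, if_neg hjv]
          omega
        · by_cases h2 : j = v
          · have h3 := hN2 i (hnb i (h2 ▸ hij.symm))
            rw [if_neg h1, if_pos h2]
            omega
          · rw [if_neg h1, if_neg h2]
            omega
      · intro h0
        have h1 : (if v = v then 1 else 0) = 0 := congrFun h0 v
        simp at h1
      · funext i
        show a i = (a i - (if i = v then 1 else 0)) + (if i = v then 1 else 0)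
        by_cases h1 : i = v
        · have h2 : a i = 1 := by rw [h1]; exact hav
          rw [if_pos h1]; omega
        · rw [if_neg h1]; omega
    -- (d₂b)
    have hd2b : ¬ ∃ f : Fin n → Bool, ∀ i j : Fin n,
        i ∉ A ∪ NbhdSet G A → j ∉ A ∪ NbhdSet G A → G.Adj i j → f i ≠ f j := by
      rintro ⟨f, hf⟩
      apply hirr
      set c : Fin n → ℕ :=
        fun i => if i ∈ NbhdSet G A then 1 else if a i ≠ 0 ∧ f i = true then 1 else 0
        with hcdef
      have hcle : ∀ i, c i ≤ a i := by
        intro i; simp only [hcdef]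
        split_ifs with h1 h2
        · have := hN2 i h1; omega
        · exact Nat.one_le_iff_ne_zero.mpr h2.1
        · omega
      have hBmem : ∀ i : Fin n, a i ≠ 0 → i ∉ NbhdSet G A → i ∉ A ∪ NbhdSet G A := by
        intro i h1 h2
        rw [Set.mem_union]
        rintro (h | h)
        · exact h1 h
        · exact h2 h
      have hccov : ∀ i j, G.Adj i j → 1 ≤ c i + c j := by
        intro i j hij
        by_cases hiN : i ∈ NbhdSet G A
        · simp [hcdef, hiN]
        · by_cases hjN : j ∈ NbhdSet G A
          · simp [hcdef, hjN]
          · have hiA : a i ≠ 0 := by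
              intro h0; exact hjN ((hNA j).mpr ⟨i, h0, hij⟩)
            have hjA : a j ≠ 0 := by
              intro h0; exact hiN ((hNA i).mpr ⟨j, h0, hij.symm⟩)
            have hfij := hf i j (hBmem i hiA hiN) (hBmem j hjA hjN) hij
            rcases Bool.eq_false_or_eq_true (f i) with hfi | hfi
            · have hci : c i = 1 := by simp [hcdef, hiN, hiA, hfi]
              omega
            · have hfj : f j = true := by
                rcases Bool.eq_false_or_eq_true (f j) with h | h
                · exact h
                · exact absurd (hfi.trans h.symm) hfij
              have hcj : c j = 1 := by simp [hcdef, hjN, hjA, hfj]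
              omega
      have hdcov : ∀ i j, G.Adj i j → 1 ≤ (a i - c i) + (a j - c j) := by
        intro i j hij
        have hdN : ∀ k, k ∈ NbhdSet G A → 1 ≤ a k - c k := by
          intro k hk
          have := hN2 k hk
          simp only [hcdef, if_pos hk]
          omega
        by_cases hiN : i ∈ NbhdSet G A
        · have := hdN i hiN; omega
        · by_cases hjN : j ∈ NbhdSet G A
          · have := hdN j hjN; omega
          · have hiA : a i ≠ 0 := by
              intro h0; exact hjN ((hNA j).mpr ⟨i, h0, hij⟩)
            have hjA : a j ≠ 0 := by
              intro h0; exact hiN ((hNA i).mpr ⟨j, h0, hij.symm⟩)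
            have hi1 : a i = 1 := hB1 i hiA hiN
            have hj1 : a j = 1 := hB1 j hjA hjN
            have hfij := hf i j (hBmem i hiA hiN) (hBmem j hjA hjN) hij
            rcases Bool.eq_false_or_eq_true (f i) with hfi | hfi
            · have hfj : f j = false := by
                rcases Bool.eq_false_or_eq_true (f j) with h | h
                · exact absurd (hfi.trans h.symm) hfij
                · exact h
              have hcj : c j = 0 := by simp [hcdef, hjN, hfj]
              omega
            · have hci : c i = 0 := by simp [hcdef, hiN, hfi]
              omega
      refine ⟨c, fun i => a i - c i, 1, 1, ⟨?_, hccov⟩, ⟨?_, hdcov⟩, ?_, rfl⟩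
      · intro h0; have := congrFun h0 w₀
        simp [hcdef, hw₀N] at this
      · intro h0
        have h1 : a w₀ - c w₀ = 0 := congrFun h0 w₀
        have h2 := hN2 w₀ hw₀N
        have h3 : c w₀ = 1 := by simp [hcdef, hw₀N]
        omega
      · funext i
        show a i = c i + (a i - c i)
        have := hcle i; omega
    exact ⟨A, ⟨i₀, hi₀⟩, hindep, hA0, hN2, hB1, hd1a, hd1b, hd2a, hd2b⟩


lemma exists_ne_zero' {a : Fin n → ℕ} (ha : a ≠ 0) : ∃ i, a i ≠ 0 := Function.ne_iff.mp ha

lemma rev0 {a : Fin n → ℕ} (ha : a ≠ 0) (i : Fin n) (hai : a = Pi.single i 1) :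
    IsIrredBCover G a 0 := by
  refine ⟨⟨ha, fun _ _ _ => Nat.zero_le _⟩, ?_⟩
  rintro ⟨c, d, i', j', ⟨hc0, -⟩, ⟨hd0, -⟩, heq, -⟩
  obtain ⟨k, hk⟩ := exists_ne_zero' hc0
  obtain ⟨l, hl⟩ := exists_ne_zero' hd0
  have h1 : c k + d k = a k := (congrFun heq k).symm
  have h2 : c l + d l = a l := (congrFun heq l).symm
  have hak : a k ≠ 0 := by omega
  have hal : a l ≠ 0 := by omega
  have hki : k = i := by
    by_contra hki
    rw [hai] at hak
    simp [Pi.single_apply, hki] at hak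
  have hli : l = i := by
    by_contra hli
    rw [hai] at hal
    simp [Pi.single_apply, hli] at hal
  have hci : c i ≠ 0 := hki ▸ hk
  have hdi : d i ≠ 0 := hli ▸ hl
  have h3 : c i + d i = a i := (congrFun heq i).symm
  have h4 : a i = 1 := by rw [hai]; simp
  omega

lemma rev1aux (hG : ∀ i : Fin n, ∃ j, G.Adj i j) {a : Fin n → ℕ} {C : Finset (Fin n)}
    (hmin : IsMinVC G C) (hai : a = fun i => if i ∈ C then 1 else 0)
    (x y : Fin n → ℕ) (hx : IsBCover G x 1) (hy0 : y ≠ 0) (hxy : a = x + y) : False := by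
  classical
  obtain ⟨hx0, hxcov⟩ := hx
  set D : Finset (Fin n) := Finset.univ.filter (fun i => x i ≠ 0) with hD
  have hmemD : ∀ i, i ∈ D ↔ x i ≠ 0 := by intro i; simp [hD]
  have hsum : ∀ i, x i + y i = (if i ∈ C then 1 else 0) := by
    intro i
    have := congrFun hxy i
    rw [hai] at this
    exact this.symm
  have hDC : D ⊆ C := by
    intro i hi
    have h1 : x i ≠ 0 := (hmemD i).mp hi
    have h2 := hsum i
    by_contra hiC
    rw [if_neg hiC] at h2
    omega
  obtain ⟨k, hk⟩ := exists_ne_zero' hy0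
  have hk2 := hsum k
  have hkC : k ∈ C := by
    by_contra hkC
    rw [if_neg hkC] at hk2
    omega
  have hkD : k ∉ D := by
    rw [hmemD]
    rw [if_pos hkC] at hk2
    omega
  refine hmin.2 D ((Finset.ssubset_iff_of_subset hDC).mpr ⟨k, hkC, hkD⟩) ?_
  intro i j hij
  have := hxcov i j hij
  rw [hmemD, hmemD]
  omega

lemma rev1 (hG : ∀ i : Fin n, ∃ j, G.Adj i j) {a : Fin n → ℕ} (ha : a ≠ 0)
    {C : Finset (Fin n)} (hmin : IsMinVC G C)
    (hai : a = fun i => if i ∈ C then 1 else 0) : IsIrredBCover G a 1 := by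
  refine ⟨⟨ha, ?_⟩, ?_⟩
  · intro i j hij
    rw [hai]
    rcases hmin.1 i j hij with h | h
    · simp [h]
    · simp [h]
  · rintro ⟨c, d, i', j', hc, hd, heq, hij'⟩
    have hub : i' ≤ 1 := by omega
    interval_cases i'
    · -- i' = 0, j' = 1
      have hj' : j' = 1 := by omega
      rw [hj'] at hd
      exact rev1aux hG hmin hai d c hd hc.1 (by rw [heq]; funext i; simp [Pi.add_apply]; omega)
    · -- i' = 1, j' = 0
      exact rev1aux hG hmin hai c d hc hd.1 heq

lemma rev2c (hG : ∀ i : Fin n, ∃ j, G.Adj i j) (hnbip : ¬ IsBipartite G)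
    {a : Fin n → ℕ} (ha : a ≠ 0) (hai : a = fun _ => 1) : IsIrredBCover G a 2 := by
  have key : ∀ x y : Fin n → ℕ, IsBCover G x 2 → a = x + y → y = 0 := by
    intro x y hx hxy
    obtain ⟨hx0, hxcov⟩ := hx
    have hsum : ∀ i, x i + y i = 1 := by
      intro i
      have := congrFun hxy i
      rw [hai] at this
      exact this.symm
    funext v
    obtain ⟨w, hw⟩ := hG v
    have h1 := hxcov v w hw
    have h2 := hsum v
    have h3 := hsum w
    simp only [Pi.zero_apply]
    omega
  refine ⟨⟨ha, ?_⟩, ?_⟩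
  · intro i j hij; rw [hai]; exact le_refl 2
  · rintro ⟨c, d, i', j', hc, hd, heq, hij'⟩
    have hub : i' ≤ 2 := by omega
    interval_cases i'
    · -- (0, 2)
      have hj' : j' = 2 := by omega
      rw [hj'] at hd
      have : c = 0 := key d c hd (by rw [heq]; funext i; simp [Pi.add_apply]; omega)
      exact hc.1 this
    · -- (1, 1)
      have hj' : j' = 1 := by omega
      rw [hj'] at hd
      obtain ⟨-, hccov⟩ := hc
      obtain ⟨-, hdcov⟩ := hd
      apply hnbip
      refine ⟨fun v => decide (c v = 0), ?_⟩
      intro i j hij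
      have h1 : c i + d i = 1 := by
        have := congrFun heq i; rw [hai] at this
        exact this.symm
      have h2 : c j + d j = 1 := by
        have := congrFun heq j; rw [hai] at this
        exact this.symm
      have h3 := hccov i j hij
      have h4 := hdcov i j hij
      simp only [ne_eq, decide_eq_decide]
      omega
    · -- (2, 0)
      have hj' : j' = 0 := by omega
      have : d = 0 := key c d hc heq
      exact hd.1 this

lemma rev2d (hG : ∀ i : Fin n, ∃ j, G.Adj i j)
    {a : Fin n → ℕ} (ha : a ≠ 0) {A : Set (Fin n)} (hAne : A.Nonempty)
    (hindep : ∀ u ∈ A, ∀ w ∈ A, ¬ G.Adj u w)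
    (hA0 : ∀ i ∈ A, a i = 0)
    (hN2 : ∀ i ∈ NbhdSet G A, a i = 2)
    (hB1 : ∀ i : Fin n, i ∉ A → i ∉ NbhdSet G A → a i = 1)
    (hiso : ∀ v : Fin n, v ∉ A ∪ NbhdSet G A →
      ∃ u : Fin n, u ∉ A ∪ NbhdSet G A ∧ G.Adj v u)
    (hnbipB : ¬ ∃ f : Fin n → Bool, ∀ i j : Fin n,
        i ∉ A ∪ NbhdSet G A → j ∉ A ∪ NbhdSet G A → G.Adj i j → f i ≠ f j) :
    IsIrredBCover G a 2 := by
  classical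
  obtain ⟨u₀, hu₀⟩ := hAne
  have hge1 : ∀ i : Fin n, i ∉ A → 1 ≤ a i := by
    intro i hiA
    by_cases hiN : i ∈ NbhdSet G A
    · have := hN2 i hiN; omega
    · have := hB1 i hiA hiN; omega
  have hmemN : ∀ v : Fin n, v ∈ NbhdSet G A ↔ ∃ u ∈ A, G.Adj u v := fun v => Iff.rfl
  have hAN : ∀ i ∈ A, i ∉ NbhdSet G A := by
    intro i hi hiN
    have := hN2 i hiN
    have := hA0 i hi
    omega
  have hBmem : ∀ i : Fin n, i ∉ A → i ∉ NbhdSet G A → i ∉ A ∪ NbhdSet G A := by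
    intro i h1 h2
    rw [Set.mem_union]
    rintro (h | h)
    · exact h1 h
    · exact h2 h
  refine ⟨⟨ha, ?_⟩, ?_⟩
  · -- a is a 2-cover
    intro i j hij
    by_cases hiA : i ∈ A
    · have hjN : j ∈ NbhdSet G A := ⟨i, hiA, hij⟩
      have := hN2 j hjN; omega
    · by_cases hjA : j ∈ A
      · have hiN : i ∈ NbhdSet G A := ⟨j, hjA, hij.symm⟩
        have := hN2 i hiN; omega
      · have := hge1 i hiA
        have := hge1 j hjA
        omega
  · rintro ⟨c, d, i', j', hc, hd, heq, hij'⟩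
    -- values sum
    have hsum : ∀ i, c i + d i = a i := by
      intro i
      exact (congrFun heq i).symm
    have key : ∀ x y : Fin n → ℕ, IsBCover G x 2 → (∀ i, x i + y i = a i) → y = 0 := by
      intro x y hx hxy
      obtain ⟨hx0, hxcov⟩ := hx
      funext v
      simp only [Pi.zero_apply]
      by_cases hvA : v ∈ A
      · have := hxy v
        have := hA0 v hvA
        omega
      · by_cases hvN : v ∈ NbhdSet G A
        · obtain ⟨u, huA, huv⟩ := (hmemN v).mp hvN
          have h1 : x u = 0 := by
            have := hxy u
            have := hA0 u huA
            omega
          have h2 := hxcov u v huv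
          have h3 := hxy v
          have h4 := hN2 v hvN
          omega
        · obtain ⟨w, hwB, hvw⟩ := hiso v (hBmem v hvA hvN)
          rw [Set.mem_union] at hwB
          push_neg at hwB
          have h1 := hB1 v hvA hvN
          have h2 := hB1 w hwB.1 hwB.2
          have h3 := hxcov v w hvw
          have h4 := hxy v
          have h5 := hxy w
          omega
    obtain ⟨w₀, hw₀⟩ := hG u₀
    have hw₀N : w₀ ∈ NbhdSet G A := ⟨u₀, hu₀, hw₀⟩
    have hub : i' ≤ 2 := by omega
    interval_cases i'
    · -- (0, 2)
      have hj' : j' = 2 := by omega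
      rw [hj'] at hd
      have : c = 0 := key d c hd (fun i => by have := hsum i; omega)
      exact hc.1 this
    · -- (1, 1)
      have hj' : j' = 1 := by omega
      rw [hj'] at hd
      obtain ⟨-, hccov⟩ := hc
      obtain ⟨-, hdcov⟩ := hd
      apply hnbipB
      refine ⟨fun v => decide (c v = 1), ?_⟩
      intro i j hiB hjB hij
      rw [Set.mem_union] at hiB hjB
      push_neg at hiB hjB
      have h1 : a i = 1 := hB1 i hiB.1 hiB.2
      have h2 : a j = 1 := hB1 j hjB.1 hjB.2
      have h3 := hsum i
      have h4 := hsum j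
      have h5 := hccov i j hij
      have h6 := hdcov i j hij
      simp only [ne_eq, decide_eq_decide]
      omega
    · -- (2, 0)
      have : d = 0 := key c d hc hsum
      exact hd.1 this


end Aux

theorem irreducible_covers_of_nonbipartite {n : ℕ} (G : SimpleGraph (Fin n))
    (hG : ∀ i : Fin n, ∃ j : Fin n, G.Adj i j)
    (hnbip : ¬ IsBipartite G)
    (a : Fin n → ℕ) (b : ℕ) (ha : a ≠ 0) :
    IsIrredBCover G a b ↔
      -- (a) 0-covers
      (b = 0 ∧ ∃ i : Fin n, a = Pi.single i 1) ∨
      -- (b) 1-covers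
      (b = 1 ∧ ∃ C : Finset (Fin n), IsMinVC G C ∧
        a = fun i => if i ∈ C then 1 else 0) ∨
      -- (c) the all-ones 2-cover
      (b = 2 ∧ a = fun _ => 1) ∨
      -- (d) 2-covers coming from an independent set A
      (b = 2 ∧ ∃ A : Set (Fin n), A.Nonempty ∧
        (∀ u ∈ A, ∀ w ∈ A, ¬ G.Adj u w) ∧
        (∀ i ∈ A, a i = 0) ∧
        (∀ i ∈ NbhdSet G A, a i = 2) ∧
        (∀ i : Fin n, i ∉ A → i ∉ NbhdSet G A → a i = 1) ∧
        -- (d₁) N_G(A) is not a vertex cover and V ≠ A ∪ N_G(A)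
        (∃ i j : Fin n, G.Adj i j ∧ i ∉ NbhdSet G A ∧ j ∉ NbhdSet G A) ∧
        (Set.univ : Set (Fin n)) ≠ A ∪ NbhdSet G A ∧
        -- (d₂) the induced subgraph on V \ (A ∪ N_G(A)) has no isolated
        -- vertices and is not bipartite
        (∀ v : Fin n, v ∉ A ∪ NbhdSet G A →
          ∃ u : Fin n, u ∉ A ∪ NbhdSet G A ∧ G.Adj v u) ∧
        ¬ ∃ f : Fin n → Bool, ∀ i j : Fin n,
            i ∉ A ∪ NbhdSet G A → j ∉ A ∪ NbhdSet G A → G.Adj i j → f i ≠ f j) := by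
  constructor
  · intro h
    match b with
    | 0 => exact Or.inl ⟨rfl, fwd0 h⟩
    | 1 => exact Or.inr (Or.inl ⟨rfl, fwd1 hG h⟩)
    | 2 =>
      rcases fwd2 hG h with h' | h'
      · exact Or.inr (Or.inr (Or.inl ⟨rfl, h'⟩))
      · exact Or.inr (Or.inr (Or.inr ⟨rfl, h'⟩))
    | (k + 3) => exact absurd (fwd_ge3 hG (by omega) h.1) h.2
  · rintro (⟨rfl, i, hai⟩ | ⟨rfl, C, hC, hai⟩ | ⟨rfl, hai⟩ |
      ⟨rfl, A, hAne, hindep, hA0, hN2, hB1, hd1a, hd1b, hd2a, hd2b⟩)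
    · exact rev0 ha i hai
    · exact rev1 hG ha hC hai
    · exact rev2c hG hnbip ha hai
    · exact rev2d hG ha hAne hindep hA0 hN2 hB1 hd2a hd2b
end

section
/- Let G be a finite simple connected graph on vertex set {x_1,…,x_n} and let 𝒜 = {e_i + e_j : {x_i,x_j} is an edge of G} ⊂ ℝ^n. A vector a = (a_1,…,a_n) ∈ ℝ^n is a nonnegative real linear combination of vectors in 𝒜 if and only if a_i ≥ 0 for i = 1,…,n and, for every independent set of vertices A of G, ∑_{x_i ∈ N_G(A)} a_i − ∑_{x_i ∈ A} a_i ≥ 0. -/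
/-!
By Farkas' lemma, `a` lies in the edge cone iff `∑ yᵢ aᵢ ≥ 0` for every `y` with `yᵢ + yⱼ ≥ 0`
on all edges; Farkas applies because the cone is generated by finitely many vectors on which
`x ↦ ∑ xᵢ` is positive, which makes it closed. The two conditions of the theorem are this test
for `y = eᵢ` and `y = χ_{N(A)} - χ_A`. Conversely, for a general such `y` let `s` be the least
nonzero `|yᵢ|`: then `y - s • sign y` still satisfies the edge inequalities and has smaller
support, while `A = {y < 0}` is independent with `N(A) ⊆ {y > 0}`, so
`∑ sign(yᵢ) aᵢ ≥ a(N(A)) - a(A) ≥ 0` for `a ≥ 0`. Induction on the support concludes.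
-/

open Finset

namespace PointedCone

variable {E : Type*} [TopologicalSpace E] [AddCommGroup E] [Module ℝ E]

theorem nonneg_of_mem_hull {S : Set E} (f : StrongDual ℝ E) (hf : ∀ y ∈ S, 0 ≤ f y)
    {x : E} (hx : x ∈ hull ℝ S) : 0 ≤ f x := by
  induction hx using Submodule.span_induction with
  | mem y hy => exact hf y hy
  | zero => simp
  | add y z _ _ hy hz => rw [map_add]; exact add_nonneg hy hz
  | smul t y _ hy => rw [← Nonneg.coe_smul, map_smul, smul_eq_mul]; exact mul_nonneg t.2 hy

variable [IsTopologicalAddGroup E] [ContinuousSMul ℝ E]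

-- A functional positive on `S` bounds every coefficient of a conical combination, so below any
-- level of that functional the cone is the image of a compact box of coefficients.
theorem isClosed_hull_of_finite_of_pos [T2Space E] {S : Set E} (hS : S.Finite)
    (φ : StrongDual ℝ E) (hφ : ∀ y ∈ S, 0 < φ y) : IsClosed (hull ℝ S : Set E) := by
  have := hS.fintype
  let L : (S → ℝ) → E := fun c => ∑ y : S, c y • (y : E)
  let box (R : ℝ) : Set (S → ℝ) := Set.univ.pi fun y => Set.Icc 0 (R / φ y)
  have hL : Continuous L := by fun_prop
  have box_sub (R : ℝ) : L '' box R ⊆ hull ℝ S := by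
    rintro _ ⟨c, hc, rfl⟩
    refine Submodule.sum_mem _ fun y _ => ?_
    have : (⟨c y, (hc y trivial).1⟩ : NNReal) • (y : E) ∈ hull ℝ S :=
      Submodule.smul_mem _ _ (subset_hull y.2)
    simpa [Nonneg.mk_smul] using this
  have sub_box (R : ℝ) : (hull ℝ S : Set E) ∩ φ ⁻¹' Set.Iio R ⊆ L '' box R := by
    rintro x ⟨hx, hxR⟩
    rw [SetLike.mem_coe, hull, ← Subtype.range_coe (s := S),
      Submodule.mem_span_range_iff_exists_fun] at hx
    obtain ⟨c, rfl⟩ := hx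
    refine ⟨fun y => c y, fun y _ => ⟨(c y).2, ?_⟩, by simp [L, Nonneg.coe_smul]⟩
    rw [le_div_iff₀ (hφ y y.2)]
    have hφx : φ (∑ z : S, c z • (z : E)) = ∑ z : S, (c z : ℝ) * φ z := by
      simp [← Nonneg.coe_smul]
    calc (c y : ℝ) * φ y ≤ ∑ z : S, (c z : ℝ) * φ z :=
          single_le_sum (fun z _ => mul_nonneg (c z).2 (hφ z z.2).le) (mem_univ y)
      _ ≤ R := by rw [← hφx]; exact (Set.mem_Iio.mp hxR).le
  refine isClosed_of_closure_subset fun x hx => ?_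
  have hK : IsCompact (L '' box (φ x + 1)) :=
    (isCompact_univ_pi fun _ => isCompact_Icc).image hL
  refine box_sub _ (hK.isClosed.closure_subset_iff.mpr (sub_box _) ?_)
  exact (isOpen_Iio.preimage φ.continuous).closure_inter ⟨hx, by simp⟩

theorem mem_hull_iff_of_finite_of_pos [LocallyConvexSpace ℝ E] [T2Space E] {S : Set E}
    (hS : S.Finite) (φ : StrongDual ℝ E) (hφ : ∀ y ∈ S, 0 < φ y) {x : E} :
    x ∈ hull ℝ S ↔ ∀ f : StrongDual ℝ E, (∀ y ∈ S, 0 ≤ f y) → 0 ≤ f x := by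
  refine ⟨fun hx f hf => nonneg_of_mem_hull f hf hx, fun h => ?_⟩
  by_contra hx
  let C : ProperCone ℝ E := ⟨hull ℝ S, isClosed_hull_of_finite_of_pos hS φ hφ⟩
  obtain ⟨f, hf, hfx⟩ := C.hyperplane_separation_point (x₀ := x) hx
  exact hfx.not_ge (h f fun y hy => hf y (subset_hull hy))

end PointedCone

theorem Real.add_sub_mul_sign_nonneg {p q s : ℝ} (hpq : 0 ≤ p + q) (hp : p ≠ 0 → s ≤ |p|)
    (hq : q ≠ 0 → s ≤ |q|) : 0 ≤ (p - s * p.sign) + (q - s * q.sign) := by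
  rcases lt_trichotomy p 0 with hp0 | rfl | hp0 <;>
  rcases lt_trichotomy q 0 with hq0 | rfl | hq0 <;>
  simp_all [Real.sign_of_neg, Real.sign_of_pos, abs_of_neg, abs_of_pos, ne_of_gt, ne_of_lt] <;>
  linarith

namespace SimpleGraph

variable {V : Type*}

section Neighborhood

variable [Fintype V] (G : SimpleGraph V) [DecidableRel G.Adj]

def neighborhood (A : Finset V) : Finset V := {v | ∃ u ∈ A, G.Adj u v}

variable {G} in
@[simp] theorem mem_neighborhood {A : Finset V} {v : V} :
    v ∈ G.neighborhood A ↔ ∃ u ∈ A, G.Adj u v := by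
  simp [neighborhood]

variable {a y : V → ℝ}

theorem sum_sign_mul_nonneg (ha : ∀ i, 0 ≤ a i)
    (hA : ∀ A : Finset V, (∀ u ∈ A, ∀ w ∈ A, ¬ G.Adj u w) →
      0 ≤ ∑ i ∈ G.neighborhood A, a i - ∑ i ∈ A, a i)
    (hy : ∀ i j, G.Adj i j → 0 ≤ y i + y j) : 0 ≤ ∑ i, (y i).sign * a i := by
  set N : Finset V := {i | y i < 0}
  set P : Finset V := {i | 0 < y i}
  have hN : ∀ u ∈ N, ∀ w ∈ N, ¬ G.Adj u w := by
    intro u hu w hw huw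
    simp only [N, mem_filter_univ] at hu hw
    linarith [hy u w huw]
  have hNP : G.neighborhood N ⊆ P := by
    intro v hv
    obtain ⟨u, hu, huv⟩ := mem_neighborhood.mp hv
    simp only [N, P, mem_filter_univ] at hu ⊢
    linarith [hy u v huv]
  have hsign : ∑ i, (y i).sign * a i = ∑ i ∈ P, a i - ∑ i ∈ N, a i := by
    simp only [P, N, sum_filter, ← sum_sub_distrib]
    refine sum_congr rfl fun i _ => ?_
    rcases lt_trichotomy (y i) 0 with h | h | h <;>
    simp [Real.sign, h, lt_asymm]
  calc 0 ≤ ∑ i ∈ G.neighborhood N, a i - ∑ i ∈ N, a i := hA N hN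
    _ ≤ ∑ i ∈ P, a i - ∑ i ∈ N, a i := by
      gcongr
      exact fun i _ _ => ha i
    _ = _ := hsign.symm

theorem sum_mul_nonneg_of_adj_add_nonneg (ha : ∀ i, 0 ≤ a i)
    (hA : ∀ A : Finset V, (∀ u ∈ A, ∀ w ∈ A, ¬ G.Adj u w) →
      0 ≤ ∑ i ∈ G.neighborhood A, a i - ∑ i ∈ A, a i)
    (hy : ∀ i j, G.Adj i j → 0 ≤ y i + y j) : 0 ≤ ∑ i, y i * a i := by
  induction hk : #{i | y i ≠ 0} using Nat.strong_induction_on generalizing y with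
  | _ k ih =>
  obtain hzero | hsupp := ({i | y i ≠ 0} : Finset V).eq_empty_or_nonempty
  · have : ∀ i, y i = 0 := by simpa [filter_eq_empty_iff] using hzero
    simp [this]
  obtain ⟨i₀, hi₀, hmin⟩ := exists_min_image _ (fun i => |y i|) hsupp
  set s := |y i₀|
  set y' : V → ℝ := fun i => y i - s * (y i).sign
  have hy' : ∀ i j, G.Adj i j → 0 ≤ y' i + y' j := fun i j hij =>
    Real.add_sub_mul_sign_nonneg (hy i j hij) (fun hi => hmin i (by simpa using hi))
      (fun hj => hmin j (by simpa using hj))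
  have hy'i₀ : y' i₀ = 0 := by
    rcases lt_or_gt_of_ne (by simpa using hi₀ : y i₀ ≠ 0) with h | h <;>
    simp [y', s, h, Real.sign_of_neg, Real.sign_of_pos, abs_of_neg, abs_of_pos]
  have hssub : ({i | y' i ≠ 0} : Finset V) ⊂ ({i | y i ≠ 0} : Finset V) := by
    refine ssubset_of_subset_of_ne (fun i hi => ?_) fun h => ?_
    · simp only [mem_filter_univ] at hi ⊢
      contrapose! hi
      simp [y', hi]
    · rw [← h] at hi₀
      simp [hy'i₀] at hi₀
  have hsum : ∑ i, y i * a i = ∑ i, y' i * a i + s * ∑ i, (y i).sign * a i := by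
    simp only [y', sub_mul, sum_sub_distrib, mul_sum, mul_assoc]
    ring
  rw [hsum]
  exact add_nonneg (ih _ (hk ▸ card_lt_card hssub) hy' rfl)
    (mul_nonneg (abs_nonneg _) (sum_sign_mul_nonneg G ha hA hy))

end Neighborhood

variable [DecidableEq V]

def edgeVector (p : V × V) : V → ℝ := Pi.single p.1 1 + Pi.single p.2 1

def edgeCone (G : SimpleGraph V) : PointedCone ℝ (V → ℝ) :=
  PointedCone.hull ℝ (edgeVector '' {p | G.Adj p.1 p.2})

variable [Fintype V] {G : SimpleGraph V} {a : V → ℝ}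

theorem mem_edgeCone_iff_forall_dual :
    a ∈ G.edgeCone ↔ ∀ f : StrongDual ℝ (V → ℝ),
      (∀ i j, G.Adj i j → 0 ≤ f (edgeVector (i, j))) → 0 ≤ f a := by
  rw [edgeCone, PointedCone.mem_hull_iff_of_finite_of_pos (Set.toFinite _)
    (∑ i, ContinuousLinearMap.proj i)]
  · simp only [Set.forall_mem_image, Set.mem_ofPred_eq, Prod.forall]
  · rintro _ ⟨p, -, rfl⟩
    simp [edgeVector, sum_add_distrib]

theorem nonneg_of_mem_edgeCone (h : a ∈ G.edgeCone) (i : V) : 0 ≤ a i := by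
  refine mem_edgeCone_iff_forall_dual.mp h (ContinuousLinearMap.proj i) fun u w _ => ?_
  simp only [edgeVector, ContinuousLinearMap.proj_apply, Pi.add_apply, Pi.single_apply]
  positivity

variable [DecidableRel G.Adj]

theorem mem_edgeCone_iff :
    a ∈ G.edgeCone ↔ ∃ c : V → V → ℝ, (∀ i j, 0 ≤ c i j) ∧ (∀ i j, c i j ≠ 0 → G.Adj i j) ∧
      a = ∑ i, ∑ j, c i j • (Pi.single i (1 : ℝ) + Pi.single j (1 : ℝ)) := by
  rw [edgeCone, ← coe_filter_univ, Submodule.mem_span_image_finset_iff_exists_fun']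
  constructor
  · rintro ⟨c, rfl⟩
    refine ⟨fun i j => if G.Adj i j then (c (i, j) : ℝ) else 0, fun i j => ?_, fun i j => ?_, ?_⟩
    · dsimp only; split_ifs <;> simp [(c (i, j)).2]
    · dsimp only; split_ifs with h <;> simp [h]
    · rw [sum_filter, ← Fintype.sum_prod_type']
      refine sum_congr rfl fun p _ => ?_
      split_ifs with h <;> simp [edgeVector, h]
  · rintro ⟨c, hc, hadj, rfl⟩
    refine ⟨fun p => ⟨c p.1 p.2, hc p.1 p.2⟩, ?_⟩
    rw [sum_filter_of_ne fun p _ hp => hadj p.1 p.2 fun h => by simp [h] at hp,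
      ← Fintype.sum_prod_type']
    simp [edgeVector]

theorem sum_neighborhood_sub_sum_nonneg_of_mem_edgeCone (h : a ∈ G.edgeCone) {A : Finset V}
    (hA : ∀ u ∈ A, ∀ w ∈ A, ¬ G.Adj u w) :
    0 ≤ ∑ i ∈ G.neighborhood A, a i - ∑ i ∈ A, a i := by
  let f : StrongDual ℝ (V → ℝ) :=
    ∑ i ∈ G.neighborhood A, ContinuousLinearMap.proj i - ∑ i ∈ A, ContinuousLinearMap.proj i
  have hf : ∀ u w, G.Adj u w → 0 ≤ f (edgeVector (u, w)) := by
    intro u w huw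
    simp only [f, edgeVector, sub_apply, _root_.sum_apply,
      ContinuousLinearMap.proj_apply, Pi.add_apply, sum_add_distrib, sum_pi_single',
      mem_neighborhood, sub_nonneg]
    split_ifs <;> grind [huw.symm]
  simpa [f] using mem_edgeCone_iff_forall_dual.mp h f hf

theorem mem_edgeCone_of_neighborhood_condition (ha : ∀ i, 0 ≤ a i)
    (hA : ∀ A : Finset V, (∀ u ∈ A, ∀ w ∈ A, ¬ G.Adj u w) →
      0 ≤ ∑ i ∈ G.neighborhood A, a i - ∑ i ∈ A, a i) : a ∈ G.edgeCone := by
  refine mem_edgeCone_iff_forall_dual.mpr fun f hf => ?_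
  rw [pi_eq_sum_univ' a]
  simpa [map_sum, mul_comm] using sum_mul_nonneg_of_adj_add_nonneg G ha hA
    (y := fun i => f (Pi.single i 1)) fun i j hij => by simpa [edgeVector] using hf i j hij

end SimpleGraph

theorem edge_cone_description_general {n : ℕ} (G : SimpleGraph (Fin n)) [DecidableRel G.Adj]
    (a : Fin n → ℝ) :
    (∃ c : Fin n → Fin n → ℝ,
        (∀ i j : Fin n, 0 ≤ c i j) ∧
        (∀ i j : Fin n, c i j ≠ 0 → G.Adj i j) ∧
        a = ∑ i : Fin n, ∑ j : Fin n,
              c i j • (Pi.single i (1 : ℝ) + Pi.single j (1 : ℝ))) ↔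
      ((∀ i : Fin n, 0 ≤ a i) ∧
        ∀ A : Finset (Fin n), (∀ u ∈ A, ∀ w ∈ A, ¬ G.Adj u w) →
          0 ≤ (∑ i ∈ Finset.univ.filter (fun v => ∃ u ∈ A, G.Adj u v), a i)
              - ∑ i ∈ A, a i) := by
  -- not `rfl`: the statement decides `∃ u ∈ A, _` through `Nat.decidableExistsFin`
  have hN (A : Finset (Fin n)) :
      univ.filter (fun v => ∃ u ∈ A, G.Adj u v) = G.neighborhood A := by
    ext; simp
  simp_rw [hN, ← SimpleGraph.mem_edgeCone_iff]
  exact ⟨fun h => ⟨G.nonneg_of_mem_edgeCone h,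
      fun A hA => G.sum_neighborhood_sub_sum_nonneg_of_mem_edgeCone h hA⟩,
    fun ⟨ha, hA⟩ => G.mem_edgeCone_of_neighborhood_condition ha hA⟩

theorem edge_cone_description {n : ℕ} (G : SimpleGraph (Fin n)) [DecidableRel G.Adj]
    (hconn : G.Connected) (a : Fin n → ℝ) :
    (∃ c : Fin n → Fin n → ℝ,
        (∀ i j : Fin n, 0 ≤ c i j) ∧
        (∀ i j : Fin n, c i j ≠ 0 → G.Adj i j) ∧
        a = ∑ i : Fin n, ∑ j : Fin n,
              c i j • (Pi.single i (1 : ℝ) + Pi.single j (1 : ℝ))) ↔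
      ((∀ i : Fin n, 0 ≤ a i) ∧
        ∀ A : Finset (Fin n), (∀ u ∈ A, ∀ w ∈ A, ¬ G.Adj u w) →
          0 ≤ (∑ i ∈ Finset.univ.filter (fun v => ∃ u ∈ A, G.Adj u v), a i)
              - ∑ i ∈ A, a i) :=
  edge_cone_description_general G a
end

section
/- Let G be a finite simple graph on vertex set {x_1,…,x_n} without isolated vertices, let S = {x_1,…,x_m}, let 0 ≠ a' = (a_1,…,a_m) ∈ ℕ^m, let a = (a_1,…,a_m,0,…,0) ∈ ℕ^n, and let b ∈ ℕ with b ≥ 1. Then a is an irreducible b-cover of the blocker Υ(G) if and only if a' is an irreducible b-cover of the blocker Υ(⟨S⟩) of the induced subgraph ⟨S⟩ of G on S. -/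
lemma exists_minvc {n : ℕ} (G : SimpleGraph (Fin n)) :
    ∀ C : Finset (Fin n), IsVC G C → ∃ D ⊆ C, IsMinVC G D := by
  intro C
  induction C using Finset.strongInduction with
  | _ C ih =>
    intro hC
    by_cases h : IsMinVC G C
    · exact ⟨C, subset_rfl, h⟩
    · rw [IsMinVC, not_and] at h
      push_neg at h
      obtain ⟨D, hDC, hD⟩ := h hC
      obtain ⟨E, hED, hE⟩ := ih D hDC hD
      exact ⟨E, hED.trans hDC.subset, hE⟩

lemma map_filter_eq {n m : ℕ} (hm : m ≤ n) (C : Finset (Fin n)) :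
    (Finset.univ.filter (fun i : Fin m => Fin.castLE hm i ∈ C)).map (Fin.castLEEmb hm)
      = C.filter (fun j : Fin n => (j : ℕ) < m) := by
  ext j
  simp only [Finset.mem_map, Finset.mem_filter, Finset.mem_univ, true_and]
  constructor
  · rintro ⟨i, hi, rfl⟩
    exact ⟨hi, i.isLt⟩
  · rintro ⟨hj, hjm⟩
    exact ⟨⟨j, hjm⟩, by simpa using hj, rfl⟩

lemma sum_ext {n m : ℕ} (hm : m ≤ n) (c : Fin n → ℕ)
    (hc : ∀ i : Fin n, ¬ (i : ℕ) < m → c i = 0) (C : Finset (Fin n)) :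
    ∑ i ∈ C, c i
      = ∑ i ∈ Finset.univ.filter (fun i : Fin m => Fin.castLE hm i ∈ C),
          c (Fin.castLE hm i) := by
  calc ∑ i ∈ C, c i
      = ∑ i ∈ C.filter (fun j : Fin n => (j : ℕ) < m), c i :=
        (Finset.sum_filter_of_ne (fun x _ hx => by
          by_contra h; exact hx (hc x h))).symm
    _ = ∑ i ∈ (Finset.univ.filter
          (fun i : Fin m => Fin.castLE hm i ∈ C)).map (Fin.castLEEmb hm), c i := by
        rw [map_filter_eq hm]
    _ = ∑ i ∈ Finset.univ.filter (fun i : Fin m => Fin.castLE hm i ∈ C),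
          c (Fin.castLE hm i) := by rw [Finset.sum_map]; rfl

/-- A nonzero vector `a : ℕ^n` is a `b`-cover of the blocker `Υ(G)` (the clutter of
minimal vertex covers of `G`) if `∑_{i ∈ C} a i ≥ b` for every minimal vertex
cover `C` of `G`. -/
def IsUpsCover {n : ℕ} (G : SimpleGraph (Fin n)) (a : Fin n → ℕ) (b : ℕ) : Prop :=
  a ≠ 0 ∧ ∀ C : Finset (Fin n), IsMinVC G C → b ≤ ∑ i ∈ C, a i

lemma cover_iff {n m : ℕ} (hm : m ≤ n) (G : SimpleGraph (Fin n))
    (c : Fin n → ℕ) (hc : ∀ i : Fin n, ¬ (i : ℕ) < m → c i = 0) (b : ℕ) :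
    IsUpsCover G c b ↔
      IsUpsCover (G.comap (Fin.castLE hm)) (fun i => c (Fin.castLE hm i)) b := by
  constructor
  · rintro ⟨hne, hcov⟩
    refine ⟨?_, ?_⟩
    · intro h
      apply hne
      funext j
      by_cases hj : (j : ℕ) < m
      · exact congrFun h ⟨j, hj⟩
      · exact hc j hj
    · intro D hD
      set D' : Finset (Fin n) := D.map (Fin.castLEEmb hm) ∪
        Finset.univ.filter (fun j : Fin n => ¬ (j : ℕ) < m) with hD'def
      have hVC : IsVC G D' := by
        intro i j hij
        by_cases hi : (i : ℕ) < m
        · by_cases hj : (j : ℕ) < m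
          · have hadj : (G.comap (Fin.castLE hm)).Adj ⟨i, hi⟩ ⟨j, hj⟩ := hij
            rcases hD.1 _ _ hadj with h | h
            · exact Or.inl (Finset.mem_union_left _ (Finset.mem_map_of_mem _ h))
            · exact Or.inr (Finset.mem_union_left _ (Finset.mem_map_of_mem _ h))
          · exact Or.inr (Finset.mem_union_right _ (by simp only [Finset.mem_filter, Finset.mem_univ, true_and]; exact hj))
        · exact Or.inl (Finset.mem_union_right _ (by simp only [Finset.mem_filter, Finset.mem_univ, true_and]; exact hi))
      obtain ⟨E, hED', hE⟩ := exists_minvc G D' hVC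
      have h1 : b ≤ ∑ i ∈ E, c i := hcov E hE
      have h2 : ∑ i ∈ E, c i ≤ ∑ i ∈ D', c i :=
        Finset.sum_le_sum_of_subset hED'
      have h3 : ∑ i ∈ D', c i = ∑ i ∈ D, c (Fin.castLE hm i) := by
        rw [show ∑ i ∈ D', c i = ∑ i ∈ D.map (Fin.castLEEmb hm), c i from
          (Finset.sum_subset Finset.subset_union_left (fun x hx hxm => by
            rcases Finset.mem_union.mp hx with h | h
            · exact absurd h hxm
            · exact hc x (Finset.mem_filter.mp h).2)).symm]
        rw [Finset.sum_map]
        rfl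
      exact le_trans (le_trans h1 h2) (le_of_eq h3)
  · rintro ⟨hne, hcov⟩
    refine ⟨?_, ?_⟩
    · intro h
      exact hne (funext fun i => by rw [h]; rfl)
    · intro C hC
      set D : Finset (Fin m) := Finset.univ.filter
        (fun i : Fin m => Fin.castLE hm i ∈ C) with hDdef
      have hVC : IsVC (G.comap (Fin.castLE hm)) D := by
        intro i j hij
        rcases hC.1 _ _ hij with h | h
        · exact Or.inl (by simp [hDdef, h])
        · exact Or.inr (by simp [hDdef, h])
      obtain ⟨E, hED, hE⟩ := exists_minvc _ D hVC
      have h1 : b ≤ ∑ i ∈ E, c (Fin.castLE hm i) := hcov E hE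
      have h2 : ∑ i ∈ E, c (Fin.castLE hm i) ≤ ∑ i ∈ D, c (Fin.castLE hm i) :=
        Finset.sum_le_sum_of_subset hED
      have h3 : ∑ i ∈ C, c i = ∑ i ∈ D, c (Fin.castLE hm i) := sum_ext hm c hc C
      exact le_trans h1 (le_trans h2 (le_of_eq h3.symm))

/-- A `b`-cover of the blocker `Υ(G)` is irreducible if it is not the sum of a
(nonzero) `i`-cover and a (nonzero) `j`-cover of `Υ(G)` with `b = i + j`. -/
def IsIrredUpsCover {n : ℕ} (G : SimpleGraph (Fin n)) (a : Fin n → ℕ) (b : ℕ) : Prop :=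
  IsUpsCover G a b ∧
    ¬ ∃ (c d : Fin n → ℕ) (i j : ℕ),
        IsUpsCover G c i ∧ IsUpsCover G d j ∧ a = c + d ∧ b = i + j

theorem restriction_of_irreducible_upsilon_cover {n m : ℕ} (hm : m ≤ n)
    (G : SimpleGraph (Fin n)) (hG : ∀ i : Fin n, ∃ j : Fin n, G.Adj i j)
    (a' : Fin m → ℕ) (ha' : a' ≠ 0) (b : ℕ) (hb : 1 ≤ b)
    (a : Fin n → ℕ)
    (hadef : ∀ i : Fin n, a i = if h : (i : ℕ) < m then a' ⟨i, h⟩ else 0) :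
    IsIrredUpsCover G a b ↔ IsIrredUpsCover (G.comap (Fin.castLE hm)) a' b := by
  have hc0 : ∀ i : Fin n, ¬ (i : ℕ) < m → a i = 0 := fun i hi => by
    rw [hadef i, dif_neg hi]
  have ha'eq : (fun i : Fin m => a (Fin.castLE hm i)) = a' := by
    funext i
    rw [hadef, dif_pos (show ((Fin.castLE hm i : Fin n) : ℕ) < m from i.isLt)]
    rfl
  constructor
  · rintro ⟨hcov, hirr⟩
    refine ⟨by rw [← ha'eq]; exact (cover_iff hm G a hc0 b).mp hcov, ?_⟩
    rintro ⟨c', d', i, j, hci, hdj, hsum, hbij⟩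
    apply hirr
    set c : Fin n → ℕ := fun k => if h : (k : ℕ) < m then c' ⟨k, h⟩ else 0 with hcdef
    set d : Fin n → ℕ := fun k => if h : (k : ℕ) < m then d' ⟨k, h⟩ else 0 with hddef
    have hcz : ∀ k : Fin n, ¬ (k : ℕ) < m → c k = 0 := fun k hk => dif_neg hk
    have hdz : ∀ k : Fin n, ¬ (k : ℕ) < m → d k = 0 := fun k hk => dif_neg hk
    have hcr : (fun i : Fin m => c (Fin.castLE hm i)) = c' := by
      funext i
      exact dif_pos (show ((Fin.castLE hm i : Fin n) : ℕ) < m from i.isLt)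
    have hdr : (fun i : Fin m => d (Fin.castLE hm i)) = d' := by
      funext i
      exact dif_pos (show ((Fin.castLE hm i : Fin n) : ℕ) < m from i.isLt)
    refine ⟨c, d, i, j, (cover_iff hm G c hcz i).mpr (by rw [hcr]; exact hci),
      (cover_iff hm G d hdz j).mpr (by rw [hdr]; exact hdj), ?_, hbij⟩
    funext k
    show a k = c k + d k
    rw [hadef k]
    by_cases h : (k : ℕ) < m
    · rw [dif_pos h]
      have := congrFun hsum ⟨k, h⟩
      simp only [Pi.add_apply] at this
      rw [this]
      show _ = (if h : (k:ℕ) < m then c' ⟨k, h⟩ else 0) + (if h : (k:ℕ) < m then d' ⟨k, h⟩ else 0)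
      rw [dif_pos h, dif_pos h]
    · rw [dif_neg h, hcz k h, hdz k h]
  · rintro ⟨hcov, hirr⟩
    refine ⟨(cover_iff hm G a hc0 b).mpr (by rw [ha'eq]; exact hcov), ?_⟩
    rintro ⟨c, d, i, j, hci, hdj, hsum, hbij⟩
    apply hirr
    have hcz : ∀ k : Fin n, ¬ (k : ℕ) < m → c k = 0 := by
      intro k hk
      have h1 := hc0 k hk
      have h2 := congrFun hsum k
      simp only [Pi.add_apply] at h2
      omega
    have hdz : ∀ k : Fin n, ¬ (k : ℕ) < m → d k = 0 := by
      intro k hk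
      have h1 := hc0 k hk
      have h2 := congrFun hsum k
      simp only [Pi.add_apply] at h2
      omega
    refine ⟨fun i => c (Fin.castLE hm i), fun i => d (Fin.castLE hm i), i, j,
      (cover_iff hm G c hcz i).mp hci, (cover_iff hm G d hdz j).mp hdj, ?_, hbij⟩
    funext k
    rw [← ha'eq]
    show a (Fin.castLE hm k) = c (Fin.castLE hm k) + d (Fin.castLE hm k)
    have := congrFun hsum (Fin.castLE hm k)
    simpa using this
end

section
/- Let G be a finite simple graph on vertex set {x_1,…,x_n} without isolated vertices and let a = (a_1,…,a_n) be an irreducible b-cover of the blocker Υ(G) with a_i ≥ 1 for all i. If the neighbor set N_G(x_n) of the vertex x_n has exactly r elements and induces a complete subgraph K_r of G, then a_i = 1 for all i, b = r, n = r + 1, and G is the complete graph K_n on its n vertices. -/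
theorem irreducible_cover_with_clique_neighborhood {n r : ℕ} (hn : 0 < n)
    (G : SimpleGraph (Fin n)) (hG : ∀ i : Fin n, ∃ j : Fin n, G.Adj i j)
    (a : Fin n → ℕ) (b : ℕ)
    (h : IsIrredUpsCover G a b) (h1 : ∀ i : Fin n, 1 ≤ a i)
    (v : Fin n) (hv : (v : ℕ) = n - 1)
    (hcard : (G.neighborSet v).ncard = r)
    (hclique : ∀ u ∈ G.neighborSet v, ∀ w ∈ G.neighborSet v, u ≠ w → G.Adj u w) :
    (∀ i : Fin n, a i = 1) ∧ b = r ∧ n = r + 1 ∧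
      ∀ i j : Fin n, i ≠ j → G.Adj i j := by
  classical
  obtain ⟨⟨ha0, haC⟩, hirr⟩ := h
  set N : Finset (Fin n) := (G.neighborSet v).toFinset with hNdef
  have hmemN : ∀ u, u ∈ N ↔ G.Adj v u := by
    intro u; simp [hNdef]
  have hNcard : N.card = r := by
    rw [← hcard, Set.ncard_eq_toFinset_card']
  have hvN : v ∉ N := by simp [hmemN]
  set S : Finset (Fin n) := insert v N with hSdef
  have hScard : S.card = r + 1 := by
    rw [hSdef, Finset.card_insert_of_notMem hvN, hNcard]
  -- Lemma A: for a minimal vertex cover C, |C ∩ S| ≤ r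
  have hA : ∀ C : Finset (Fin n), IsMinVC G C → (C ∩ S).card ≤ r := by
    rintro C ⟨hVC, hmin⟩
    by_contra hlt
    push_neg at hlt
    have hsub : S ⊆ C := by
      have h2 : S.card ≤ (C ∩ S).card := by omega
      have h3 : C ∩ S = S :=
        Finset.eq_of_subset_of_card_le Finset.inter_subset_right h2
      intro x hx
      rw [← h3] at hx
      exact (Finset.mem_inter.mp hx).1
    have hvC : v ∈ C := hsub (Finset.mem_insert_self _ _)
    refine hmin (C.erase v) (Finset.erase_ssubset hvC) ?_
    intro i j hij
    rcases hVC i j hij with hiC | hjC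
    · by_cases hi : i = v
      · have hjN : j ∈ N := (hmemN j).mpr (hi ▸ hij)
        have hjv : j ≠ v := fun hjv => hvN (hjv ▸ hjN)
        exact Or.inr (Finset.mem_erase.mpr ⟨hjv, hsub (Finset.mem_insert_of_mem hjN)⟩)
      · exact Or.inl (Finset.mem_erase.mpr ⟨hi, hiC⟩)
    · by_cases hj : j = v
      · have hiN : i ∈ N := (hmemN i).mpr (hj ▸ hij.symm)
        have hiv : i ≠ v := fun hiv => hvN (hiv ▸ hiN)
        exact Or.inl (Finset.mem_erase.mpr ⟨hiv, hsub (Finset.mem_insert_of_mem hiN)⟩)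
      · exact Or.inr (Finset.mem_erase.mpr ⟨hj, hjC⟩)
  -- Lemma B: for a minimal vertex cover C, r ≤ |C ∩ S|
  have hB : ∀ C : Finset (Fin n), IsMinVC G C → r ≤ (C ∩ S).card := by
    rintro C ⟨hVC, hmin⟩
    by_cases hvC : v ∈ C
    · by_cases hNC : N ⊆ C
      · have hSsub : S ⊆ C ∩ S := by
          intro x hx
          refine Finset.mem_inter.mpr ⟨?_, hx⟩
          rcases Finset.mem_insert.mp hx with rfl | hxN
          · exact hvC
          · exact hNC hxN
        have := Finset.card_le_card hSsub
        omega
      · obtain ⟨u, huN, huC⟩ := Finset.not_subset.mp hNC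
        have hrpos : 0 < r := by
          rw [← hNcard]; exact Finset.card_pos.mpr ⟨u, huN⟩
        have hsub : insert v (N.erase u) ⊆ C ∩ S := by
          intro w hw
          rcases Finset.mem_insert.mp hw with rfl | hw
          · exact Finset.mem_inter.mpr ⟨hvC, Finset.mem_insert_self _ _⟩
          · have hwN := Finset.mem_of_mem_erase hw
            have hwu : w ≠ u := Finset.ne_of_mem_erase hw
            have hadj : G.Adj u w :=
              hclique u ((hmemN u).mp huN) w ((hmemN w).mp hwN) (Ne.symm hwu)
            rcases hVC u w hadj with h' | h'
            · exact absurd h' huC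
            · exact Finset.mem_inter.mpr ⟨h', Finset.mem_insert_of_mem hwN⟩
        have hvNe : v ∉ N.erase u := fun hx => hvN (Finset.mem_of_mem_erase hx)
        have hc2 : (insert v (N.erase u)).card = r := by
          rw [Finset.card_insert_of_notMem hvNe, Finset.card_erase_of_mem huN, hNcard]
          omega
        have := Finset.card_le_card hsub
        omega
    · have hNC : N ⊆ C := by
        intro u huN
        rcases hVC v u ((hmemN u).mp huN) with h' | h'
        · exact absurd h' hvC
        · exact h'
      have hsub : N ⊆ C ∩ S := fun u hu =>
        Finset.mem_inter.mpr ⟨hNC hu, Finset.mem_insert_of_mem hu⟩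
      have := Finset.card_le_card hsub
      omega
  -- the indicator of S
  set c : Fin n → ℕ := fun i => if i ∈ S then 1 else 0 with hcdef
  have hsumc : ∀ C : Finset (Fin n), ∑ i ∈ C, c i = (C ∩ S).card := by
    intro C
    rw [hcdef]
    rw [Finset.sum_ite_mem]
    simp
  -- Step 1: a = c
  have hac : a = c := by
    by_contra hne
    have hcle : ∀ i, c i ≤ a i := by
      intro i
      have := h1 i
      by_cases hi : i ∈ S <;> simp [hcdef, hi] <;> omega
    set d : Fin n → ℕ := fun i => a i - c i with hddef
    have hcd : a = c + d := by
      funext i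
      have := hcle i
      simp only [Pi.add_apply, hddef]
      omega
    have hd0 : d ≠ 0 := by
      intro hd
      apply hne
      funext i
      have hdi : d i = 0 := congrFun hd i
      have hci := hcle i
      simp only [hddef] at hdi
      omega
    have hc0 : c ≠ 0 := by
      intro hc
      have : c v = 0 := congrFun hc v
      simp [hcdef, hSdef] at this
    refine hirr ⟨c, d, b - (b - r), b - r, ⟨hc0, ?_⟩, ⟨hd0, ?_⟩, hcd, by omega⟩
    · intro C hC
      rw [hsumc]
      have := hB C hC
      omega
    · intro C hC
      have h3 := haC C hC
      have h4 := hA C hC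
      have h5 : ∑ i ∈ C, a i = ∑ i ∈ C, c i + ∑ i ∈ C, d i := by
        rw [hcd, ← Finset.sum_add_distrib]
        rfl
      rw [hsumc] at h5
      omega
  have ha1 : ∀ i : Fin n, a i = 1 := by
    intro i
    have := h1 i
    rw [hac] at this ⊢
    by_cases hi : i ∈ S <;> simp [hcdef, hi] at this ⊢
  have hSuniv : ∀ i : Fin n, i ∈ S := by
    intro i
    have h2 := h1 i
    rw [hac] at h2
    by_cases hi : i ∈ S
    · exact hi
    · simp [hcdef, hi] at h2
  have hnr : n = r + 1 := by
    have : S = Finset.univ := Finset.eq_univ_iff_forall.mpr hSuniv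
    have h2 : S.card = n := by rw [this, Finset.card_univ, Fintype.card_fin]
    omega
  have hallN : ∀ j : Fin n, j ≠ v → j ∈ N := by
    intro j hj
    rcases Finset.mem_insert.mp (hSuniv j) with rfl | hjN
    · exact absurd rfl hj
    · exact hjN
  -- N is a minimal vertex cover
  have hNVC : IsMinVC G N := by
    constructor
    · intro i j hij
      by_cases hi : i = v
      · subst hi
        exact Or.inr ((hmemN j).mpr hij)
      · exact Or.inl (hallN i hi)
    · intro D hD hDVC
      obtain ⟨u, huN, huD⟩ := Finset.exists_of_ssubset hD
      rcases hDVC v u ((hmemN u).mp huN) with h' | h'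
      · exact hvN (hD.subset h')
      · exact huD h'
  have hbler : b ≤ r := by
    have h2 := haC N hNVC
    have h3 : ∑ i ∈ N, a i = N.card := by
      rw [Finset.card_eq_sum_ones]
      exact Finset.sum_congr rfl fun i _ => ha1 i
    omega
  have hrpos : 0 < r := by
    obtain ⟨u, hu⟩ := hG v
    have : u ∈ N := (hmemN u).mpr hu
    rw [← hNcard]
    exact Finset.card_pos.mpr ⟨u, this⟩
  have hbger : r ≤ b := by
    by_contra hblt
    push_neg at hblt
    set c' : Fin n → ℕ := fun i => if i = v then 1 else 0 with hc'def
    set d' : Fin n → ℕ := fun i => if i ∈ N then 1 else 0 with hd'def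
    have hcd' : a = d' + c' := by
      funext i
      have hi1 := ha1 i
      by_cases hi : i = v
      · subst hi
        simp [hd'def, hc'def, hvN, hi1]
      · have hiN := hallN i hi
        simp [hd'def, hc'def, hi, hiN, hi1]
    have hd'0 : d' ≠ 0 := by
      obtain ⟨u, hu⟩ := hG v
      have huN : u ∈ N := (hmemN u).mpr hu
      intro hd
      have : d' u = 0 := congrFun hd u
      simp [hd'def, huN] at this
    have hc'0 : c' ≠ 0 := by
      intro hc
      have : c' v = 0 := congrFun hc v
      simp [hc'def] at this
    refine hirr ⟨d', c', b, 0, ⟨hd'0, ?_⟩, ⟨hc'0, fun C _ => Nat.zero_le _⟩, hcd', by omega⟩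
    intro C hC
    have h2 := hB C hC
    have h3 : ∑ i ∈ C, d' i = (C ∩ N).card := by
      rw [hd'def, Finset.sum_ite_mem]
      simp
    have h4 : (C ∩ S).card ≤ (C ∩ N).card + 1 := by
      have hsub : C ∩ S ⊆ insert v (C ∩ N) := by
        intro w hw
        obtain ⟨hwC, hwS⟩ := Finset.mem_inter.mp hw
        rcases Finset.mem_insert.mp hwS with rfl | hwN
        · exact Finset.mem_insert_self _ _
        · exact Finset.mem_insert_of_mem (Finset.mem_inter.mpr ⟨hwC, hwN⟩)
      calc (C ∩ S).card ≤ (insert v (C ∩ N)).card := Finset.card_le_card hsub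
        _ ≤ (C ∩ N).card + 1 := Finset.card_insert_le _ _
    omega
  refine ⟨ha1, by omega, hnr, ?_⟩
  intro i j hij
  by_cases hi : i = v
  · subst hi
    exact (hmemN j).mp (hallN j (Ne.symm hij))
  · by_cases hj : j = v
    · subst hj
      exact ((hmemN i).mp (hallN i hi)).symm
    · exact hclique i ((hmemN i).mp (hallN i hi)) j ((hmemN j).mp (hallN j hj)) hij
end

section
/- Let G be a finite simple graph on vertex set {x_1,…,x_n} without isolated vertices and let 0 ≠ a = (a_1,…,a_n) ∈ ℕ^n. If a_i ∈ {0,1} for all i and the set {x_i : a_i > 0} induces a complete subgraph of G with r + 1 vertices, then a is an irreducible r-cover of the blocker Υ(G). -/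
/-- Every vertex cover contains a minimal vertex cover. -/
lemma exists_minVC_subset {n : ℕ} (G : SimpleGraph (Fin n)) :
    ∀ C : Finset (Fin n), IsVC G C → ∃ D, D ⊆ C ∧ IsMinVC G D := by
  intro C
  induction C using Finset.strongInduction with
  | _ C ih =>
    intro hC
    by_cases h : ∀ D : Finset (Fin n), D ⊂ C → ¬ IsVC G D
    · exact ⟨C, subset_rfl, hC, h⟩
    · push_neg at h
      obtain ⟨D, hDC, hD⟩ := h
      obtain ⟨E, hED, hE⟩ := ih D hDC hD
      exact ⟨E, hED.trans hDC.subset, hE⟩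

/-- For any vertex `v` there is a minimal vertex cover avoiding `v`. -/
lemma exists_minVC_avoiding {n : ℕ} (G : SimpleGraph (Fin n)) (v : Fin n) :
    ∃ D : Finset (Fin n), IsMinVC G D ∧ v ∉ D := by
  have hvc : IsVC G (Finset.univ.erase v) := by
    intro i j hij
    by_cases hi : i = v
    · right
      exact Finset.mem_erase.2 ⟨fun h => G.ne_of_adj hij (hi.trans h.symm) , Finset.mem_univ j⟩
    · left
      exact Finset.mem_erase.2 ⟨hi, Finset.mem_univ i⟩
  obtain ⟨D, hDsub, hD⟩ := exists_minVC_subset G _ hvc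
  exact ⟨D, hD, fun hv => (Finset.mem_erase.1 (hDsub hv)).1 rfl⟩

theorem clique_gives_irreducible_cover {n r : ℕ}
    (G : SimpleGraph (Fin n)) (hG : ∀ i : Fin n, ∃ j : Fin n, G.Adj i j)
    (a : Fin n → ℕ) (ha : a ≠ 0)
    (h01 : ∀ i : Fin n, a i ≤ 1)
    (hclique : ∀ i j : Fin n, 0 < a i → 0 < a j → i ≠ j → G.Adj i j)
    (hcard : (Finset.univ.filter (fun i : Fin n => 0 < a i)).card = r + 1) :
    IsIrredUpsCover G a r := by
  set S : Finset (Fin n) := Finset.univ.filter (fun i : Fin n => 0 < a i) with hS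
  have hmemS : ∀ i, i ∈ S ↔ 0 < a i := by
    intro i; simp [hS]
  have haS : ∀ i ∈ S, a i = 1 := fun i hi =>
    le_antisymm (h01 i) ((hmemS i).1 hi)
  constructor
  · refine ⟨ha, fun C hC => ?_⟩
    -- S \ C has at most one element
    have hle1 : (S \ C).card ≤ 1 := by
      refine Finset.card_le_one.2 fun i hi j hj => ?_
      by_contra hne
      have hadj := hclique i j ((hmemS i).1 (Finset.mem_sdiff.1 hi).1)
        ((hmemS j).1 (Finset.mem_sdiff.1 hj).1) hne
      rcases hC.1 i j hadj with h | h
      · exact (Finset.mem_sdiff.1 hi).2 h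
      · exact (Finset.mem_sdiff.1 hj).2 h
    have hsplit : (S ∩ C).card + (S \ C).card = r + 1 := by
      rw [Finset.card_inter_add_card_sdiff, hcard]
    have hr : r ≤ (S ∩ C).card := by omega
    calc r ≤ (S ∩ C).card := hr
      _ = ∑ i ∈ S ∩ C, a i := by
          rw [Finset.card_eq_sum_ones]
          exact Finset.sum_congr rfl fun i hi => (haS i (Finset.mem_inter.1 hi).1).symm
      _ ≤ ∑ i ∈ C, a i :=
          Finset.sum_le_sum_of_subset (Finset.inter_subset_right)
  · rintro ⟨c, d, i, j, ⟨hc0, hcov⟩, ⟨hd0, hdov⟩, hacd, hrij⟩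
    have hcd : ∀ k, c k + d k = a k := fun k => by
      rw [hacd]; rfl
    set Sc : Finset (Fin n) := Finset.univ.filter (fun k : Fin n => 0 < c k) with hSc
    set Sd : Finset (Fin n) := Finset.univ.filter (fun k : Fin n => 0 < d k) with hSd
    have hScS : Sc ⊆ S := by
      intro k hk
      have : 0 < c k := by simpa [hSc] using hk
      exact (hmemS k).2 (by have := hcd k; omega)
    have hSdS : Sd ⊆ S := by
      intro k hk
      have : 0 < d k := by simpa [hSd] using hk
      exact (hmemS k).2 (by have := hcd k; omega)
    have hdisj : Disjoint Sc Sd := by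
      rw [Finset.disjoint_left]
      intro k hk1 hk2
      have h1 : 0 < c k := by simpa [hSc] using hk1
      have h2 : 0 < d k := by simpa [hSd] using hk2
      have := h01 k
      have := hcd k
      omega
    have hcards : Sc.card + Sd.card ≤ r + 1 := by
      rw [← Finset.card_union_of_disjoint hdisj, ← hcard]
      exact Finset.card_le_card (Finset.union_subset hScS hSdS)
    -- supports are nonempty
    have hnec : Sc.Nonempty := by
      rcases Function.ne_iff.1 hc0 with ⟨k, hk⟩
      have hk' : 0 < c k := by simpa [Nat.pos_iff_ne_zero] using hk
      exact ⟨k, by simp [hSc, hk']⟩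
    have hned : Sd.Nonempty := by
      rcases Function.ne_iff.1 hd0 with ⟨k, hk⟩
      have hk' : 0 < d k := by simpa [Nat.pos_iff_ne_zero] using hk
      exact ⟨k, by simp [hSd, hk']⟩
    -- key bound: i + 1 ≤ Sc.card
    have key : ∀ (e : Fin n → ℕ) (Se : Finset (Fin n)) (b : ℕ),
        Se = Finset.univ.filter (fun k : Fin n => 0 < e k) →
        (∀ k, e k ≤ 1) →
        (∀ C : Finset (Fin n), IsMinVC G C → b ≤ ∑ k ∈ C, e k) →
        Se.Nonempty → b + 1 ≤ Se.card := by
      intro e Se b hSe he1 hcov hne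
      obtain ⟨v, hv⟩ := hne
      obtain ⟨D, hD, hvD⟩ := exists_minVC_avoiding G v
      have hb := hcov D hD
      have hsum : ∑ k ∈ D, e k ≤ (Se.erase v).card := by
        calc ∑ k ∈ D, e k = ∑ k ∈ D ∩ Se, e k := by
              refine (Finset.sum_subset (Finset.inter_subset_left) ?_).symm
              intro k hk hk2
              have : k ∉ Se := fun h => hk2 (Finset.mem_inter.2 ⟨hk, h⟩)
              have : ¬ 0 < e k := by
                intro h; exact this (by rw [hSe]; simp [h])
              omega
          _ ≤ (D ∩ Se).card := by
              rw [Finset.card_eq_sum_ones]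
              exact Finset.sum_le_sum fun k _ => he1 k
          _ ≤ (Se.erase v).card := by
              refine Finset.card_le_card ?_
              intro k hk
              rcases Finset.mem_inter.1 hk with ⟨hk1, hk2⟩
              exact Finset.mem_erase.2 ⟨fun h => hvD (h ▸ hk1), hk2⟩
      have hverase := Finset.card_erase_of_mem hv
      have hvpos : 0 < Se.card := Finset.card_pos.2 ⟨v, hv⟩
      omega
    have hic := key c Sc i hSc (fun k => by have := hcd k; have := h01 k; omega) hcov hnec
    have hjd := key d Sd j hSd (fun k => by have := hcd k; have := h01 k; omega) hdov hned
    omega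
end

section
/- Let G be a finite simple graph on vertex set {x_1,…,x_n} without isolated vertices. If a = e_1 + ⋯ + e_r (the 0/1 vector supported on {x_1,…,x_r}) is an irreducible b-cover of the blocker Υ(G), then b = α_0(H), where H = ⟨x_1,…,x_r⟩ is the induced subgraph of G on {x_1,…,x_r}. -/
/-- The vertex covering number `α₀` of the induced subgraph of `G` on the set of
vertices `S`: the least cardinality of a set `C ⊆ S` covering every edge of `G`
with both endpoints in `S`. -/
noncomputable def alpha0On {n : ℕ} (G : SimpleGraph (Fin n)) (S : Finset (Fin n)) : ℕ :=
  sInf {k : ℕ | ∃ C : Finset (Fin n), C ⊆ S ∧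
    (∀ i ∈ S, ∀ j ∈ S, G.Adj i j → i ∈ C ∨ j ∈ C) ∧ C.card = k}

/-!
Write `a = 𝟙_S` for `S = {x_1, …, x_r}`. Completing a minimum cover `C₀` of `G[S]` by all
vertices outside `S` gives a vertex cover of `G`, and a minimal cover inside it meets `S` in
at most `|C₀| = α₀(G[S])` vertices, so `b ≤ α₀(G[S])`. Conversely every vertex cover of `G`
meets `S` in a vertex cover of `G[S]`, hence in at least `α₀(G[S])` vertices. If
`b < α₀(G[S])`, then `S` has two vertices, and for `v ∈ S` the splitting
`𝟙_S = 𝟙_{S \ {v}} + e_v` writes `a` as a `b`-cover plus a `0`-cover, so `a` is reducible.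
-/

open Finset

variable {n : ℕ} {G : SimpleGraph (Fin n)}

theorem IsVC.exists_subset_isMinVC {D : Finset (Fin n)} (hD : IsVC G D) :
    ∃ C ⊆ D, IsMinVC G C := by
  obtain ⟨C, hCD, hC⟩ := exists_minimal_le_of_wellFoundedLT (IsVC G) D hD
  exact ⟨C, hCD, hC.prop, fun D' hD'C hD' => hD'C.not_ge (hC.le_of_le hD' hD'C.le)⟩

theorem alpha0On_le_card {S C : Finset (Fin n)} (hCS : C ⊆ S)
    (hC : ∀ i ∈ S, ∀ j ∈ S, G.Adj i j → i ∈ C ∨ j ∈ C) : alpha0On G S ≤ #C :=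
  Nat.sInf_le ⟨C, hCS, hC, rfl⟩

variable (G) in
theorem exists_card_eq_alpha0On (S : Finset (Fin n)) :
    ∃ C ⊆ S, (∀ i ∈ S, ∀ j ∈ S, G.Adj i j → i ∈ C ∨ j ∈ C) ∧ #C = alpha0On G S :=
  Nat.sInf_mem (s := {k | ∃ C ⊆ S, (∀ i ∈ S, ∀ j ∈ S, G.Adj i j → i ∈ C ∨ j ∈ C) ∧ #C = k})
    ⟨#S, S, subset_rfl, fun _ hi _ _ _ => Or.inl hi, rfl⟩

theorem IsVC.alpha0On_le_card_inter {C : Finset (Fin n)} (hC : IsVC G C) (S : Finset (Fin n)) :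
    alpha0On G S ≤ #(C ∩ S) :=
  alpha0On_le_card inter_subset_right fun i hi j hj hij =>
    (hC i j hij).imp (fun hiC => mem_inter.2 ⟨hiC, hi⟩) (fun hjC => mem_inter.2 ⟨hjC, hj⟩)

theorem alpha0On_eq_zero_of_card_le_one {S : Finset (Fin n)} (hS : #S ≤ 1) :
    alpha0On G S = 0 :=
  Nat.eq_zero_of_le_zero <| alpha0On_le_card (empty_subset S) fun i hi j hj hij =>
    (G.ne_of_adj hij (card_le_one.1 hS i hi j hj)).elim

def binaryVec (S : Finset (Fin n)) : Fin n → ℕ := fun i => if i ∈ S then 1 else 0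

theorem sum_binaryVec (S C : Finset (Fin n)) : ∑ i ∈ C, binaryVec S i = #(C ∩ S) := by
  simp only [binaryVec, sum_boole, filter_mem_eq_inter, Nat.cast_id]

theorem binaryVec_ne_zero {S : Finset (Fin n)} (hS : S.Nonempty) : binaryVec S ≠ 0 := by
  obtain ⟨v, hv⟩ := hS
  intro h
  simpa [binaryVec, hv] using congrFun h v

theorem binaryVec_erase_add_single {S : Finset (Fin n)} {v : Fin n} (hv : v ∈ S) :
    binaryVec (S.erase v) + Pi.single v 1 = binaryVec S := by
  ext i
  by_cases hiv : i = v
  · subst hiv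
    simp [binaryVec, hv]
  · simp [binaryVec, hiv]

theorem IsUpsCover.le_alpha0On {S : Finset (Fin n)} {b : ℕ} (h : IsUpsCover G (binaryVec S) b) :
    b ≤ alpha0On G S := by
  obtain ⟨C₀, hC₀S, hC₀, hC₀card⟩ := exists_card_eq_alpha0On G S
  have hvc : IsVC G (C₀ ∪ Sᶜ) := by
    intro i j hij
    by_cases hi : i ∈ S
    · by_cases hj : j ∈ S
      · exact (hC₀ i hi j hj hij).imp (mem_union_left _) (mem_union_left _)
      · exact Or.inr (mem_union_right _ (mem_compl.2 hj))
    · exact Or.inl (mem_union_right _ (mem_compl.2 hi))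
  obtain ⟨C, hCsub, hC⟩ := hvc.exists_subset_isMinVC
  calc b ≤ #(C ∩ S) := sum_binaryVec S C ▸ h.2 C hC
    _ ≤ #C₀ := card_le_card fun x hx => by
      rw [mem_inter] at hx
      simpa [hx.2] using hCsub hx.1
    _ = alpha0On G S := hC₀card

theorem IsIrredUpsCover.alpha0On_le {S : Finset (Fin n)} {b : ℕ}
    (h : IsIrredUpsCover G (binaryVec S) b) : alpha0On G S ≤ b := by
  by_contra! hlt
  have hS : 1 < #S := by
    by_contra! hS
    rw [alpha0On_eq_zero_of_card_le_one hS] at hlt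
    omega
  obtain ⟨v, hv⟩ : S.Nonempty := card_pos.1 (by omega)
  have hcover : IsUpsCover G (binaryVec (S.erase v)) b := by
    refine ⟨binaryVec_ne_zero (card_pos.1 (by rw [card_erase_of_mem hv]; omega)), fun C hC => ?_⟩
    rw [sum_binaryVec, inter_erase]
    have hα := hC.1.alpha0On_le_card_inter S
    have := pred_card_le_card_erase (s := C ∩ S) (a := v)
    omega
  have hsingle : IsUpsCover G (Pi.single v 1) 0 :=
    ⟨by simp, fun _ _ => Nat.zero_le _⟩
  exact h.2 ⟨_, _, b, 0, hcover, hsingle, (binaryVec_erase_add_single hv).symm, rfl⟩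

theorem binary_irreducible_cover_degree_general {n r : ℕ}
    (G : SimpleGraph (Fin n))
    (b : ℕ)
    (h : IsIrredUpsCover G (fun i => if (i : ℕ) < r then 1 else 0) b) :
    b = alpha0On G (Finset.univ.filter (fun i : Fin n => (i : ℕ) < r)) := by
  have ha : (fun i : Fin n => if (i : ℕ) < r then 1 else 0) =
      binaryVec (univ.filter fun i : Fin n => (i : ℕ) < r) := by
    ext i
    simp [binaryVec]
  rw [ha] at h
  exact le_antisymm h.1.le_alpha0On h.alpha0On_le

theorem binary_irreducible_cover_degree {n r : ℕ} (hr : r ≤ n)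
    (G : SimpleGraph (Fin n)) (hG : ∀ i : Fin n, ∃ j : Fin n, G.Adj i j)
    (b : ℕ)
    (h : IsIrredUpsCover G (fun i => if (i : ℕ) < r then 1 else 0) b) :
    b = alpha0On G (Finset.univ.filter (fun i : Fin n => (i : ℕ) < r)) :=
  binary_irreducible_cover_degree_general G b h
end

section
/- Let G be a finite simple graph on vertex set V(G) = {x_1,…,x_n} without isolated vertices and let a = (1,…,1) ∈ ℕ^n. Then a is a reducible α_0(G)-cover of the blocker Υ(G) if and only if there exist induced subgraphs H_1 and H_2 of G on nonempty vertex sets such that (i) V(G) is the disjoint union of V(H_1) and V(H_2), and (ii) α_0(G) = α_0(H_1) + α_0(H_2). -/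
lemma exists_min_vc {n : ℕ} (G : SimpleGraph (Fin n)) :
    ∀ C : Finset (Fin n), IsVC G C → ∃ M, M ⊆ C ∧ IsMinVC G M := by
  intro C
  induction C using Finset.strongInductionOn with
  | _ C ih =>
    intro hC
    by_cases h : ∀ D : Finset (Fin n), D ⊂ C → ¬ IsVC G D
    · exact ⟨C, subset_rfl, hC, h⟩
    · push_neg at h
      obtain ⟨D, hD, hDvc⟩ := h
      obtain ⟨M, hM, hMvc⟩ := ih D hD hDvc
      exact ⟨M, hM.trans hD.subset, hMvc⟩

lemma alpha0On_exists {n : ℕ} (G : SimpleGraph (Fin n)) (S : Finset (Fin n)) :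
    ∃ C : Finset (Fin n), C ⊆ S ∧ (∀ i ∈ S, ∀ j ∈ S, G.Adj i j → i ∈ C ∨ j ∈ C) ∧
      C.card = alpha0On G S := by
  have hne : {k : ℕ | ∃ C : Finset (Fin n), C ⊆ S ∧
      (∀ i ∈ S, ∀ j ∈ S, G.Adj i j → i ∈ C ∨ j ∈ C) ∧ C.card = k}.Nonempty :=
    ⟨S.card, S, subset_rfl, fun i hi j hj _ => Or.inl hi, rfl⟩
  exact Nat.sInf_mem hne

lemma alpha0On_le {n : ℕ} (G : SimpleGraph (Fin n)) (S C : Finset (Fin n))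
    (h1 : C ⊆ S) (h2 : ∀ i ∈ S, ∀ j ∈ S, G.Adj i j → i ∈ C ∨ j ∈ C) :
    alpha0On G S ≤ C.card :=
  Nat.sInf_le ⟨C, h1, h2, rfl⟩

lemma sum_indicator {n : ℕ} (V C : Finset (Fin n)) :
    (∑ x ∈ C, if x ∈ V then (1:ℕ) else 0) = (C ∩ V).card := by
  rw [Finset.sum_ite_mem, Finset.sum_const, smul_eq_mul, mul_one]

theorem allOnes_reducible_iff_graph_reducible {n : ℕ}
    (G : SimpleGraph (Fin n)) (hG : ∀ i : Fin n, ∃ j : Fin n, G.Adj i j) :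
    (IsUpsCover G (fun _ => 1) (alpha0On G Finset.univ) ∧
      ∃ (c d : Fin n → ℕ) (i j : ℕ),
        IsUpsCover G c i ∧ IsUpsCover G d j ∧
        (fun _ => (1 : ℕ)) = c + d ∧ alpha0On G Finset.univ = i + j) ↔
    ∃ V1 V2 : Finset (Fin n), V1.Nonempty ∧ V2.Nonempty ∧
      Disjoint V1 V2 ∧ V1 ∪ V2 = Finset.univ ∧
      alpha0On G Finset.univ = alpha0On G V1 + alpha0On G V2 := by
  constructor
  · rintro ⟨-, c, d, i, j, ⟨hc0, hc⟩, ⟨hd0, hd⟩, hcd, hij⟩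
    have hsum : ∀ x, c x + d x = 1 := fun x => (congrFun hcd x).symm
    set V1 : Finset (Fin n) := Finset.univ.filter (fun x => c x ≠ 0) with hV1
    set V2 : Finset (Fin n) := Finset.univ.filter (fun x => d x ≠ 0) with hV2
    have hcx : ∀ x, c x = if x ∈ V1 then 1 else 0 := by
      intro x
      have hs := hsum x
      by_cases h : c x = 0
      · simp [hV1, h]
      · have h1 : c x = 1 := by omega
        simp [hV1, h, h1]
    have hdx : ∀ x, d x = if x ∈ V2 then 1 else 0 := by
      intro x
      have hs := hsum x
      by_cases h : d x = 0
      · simp [hV2, h]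
      · have h1 : d x = 1 := by omega
        simp [hV2, h, h1]
    have hdisj : Disjoint V1 V2 := by
      rw [Finset.disjoint_left]
      intro x hx1 hx2
      simp only [hV1, hV2, Finset.mem_filter, Finset.mem_univ, true_and] at hx1 hx2
      have := hsum x; omega
    have huniv : V1 ∪ V2 = Finset.univ := by
      apply Finset.eq_univ_of_forall
      intro x
      simp only [Finset.mem_union, hV1, hV2, Finset.mem_filter, Finset.mem_univ, true_and]
      have := hsum x; omega
    have hne1 : V1.Nonempty := by
      rcases Function.ne_iff.mp hc0 with ⟨x, hx⟩
      exact ⟨x, Finset.mem_filter.mpr ⟨Finset.mem_univ x, hx⟩⟩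
    have hne2 : V2.Nonempty := by
      rcases Function.ne_iff.mp hd0 with ⟨x, hx⟩
      exact ⟨x, Finset.mem_filter.mpr ⟨Finset.mem_univ x, hx⟩⟩
    have hsumc : ∀ C : Finset (Fin n), ∑ x ∈ C, c x = (C ∩ V1).card := by
      intro C
      rw [← sum_indicator V1 C]
      exact Finset.sum_congr rfl fun x _ => hcx x
    have hsumd : ∀ C : Finset (Fin n), ∑ x ∈ C, d x = (C ∩ V2).card := by
      intro C
      rw [← sum_indicator V2 C]
      exact Finset.sum_congr rfl fun x _ => hdx x
    -- i ≤ alpha0On G V1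
    have key1 : i ≤ alpha0On G V1 := by
      obtain ⟨C1, hC1S, hC1cov, hC1card⟩ := alpha0On_exists G V1
      have hvc : IsVC G (C1 ∪ V2) := by
        intro a b hab
        by_cases ha : a ∈ V1
        · by_cases hb : b ∈ V1
          · exact (hC1cov a ha b hb hab).imp (fun h => Finset.mem_union_left _ h) (fun h => Finset.mem_union_left _ h)
          · have : b ∈ V2 := by
              have := Finset.mem_univ (α := Fin n) b
              rw [← huniv, Finset.mem_union] at this
              tauto
            exact Or.inr (Finset.mem_union_right _ this)
        · have : a ∈ V2 := by
            have := Finset.mem_univ (α := Fin n) a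
            rw [← huniv, Finset.mem_union] at this
            tauto
          exact Or.inl (Finset.mem_union_right _ this)
      obtain ⟨M, hMsub, hMmin⟩ := exists_min_vc G _ hvc
      have h1 : i ≤ (M ∩ V1).card := by rw [← hsumc M]; exact hc M hMmin
      have h2 : M ∩ V1 ⊆ C1 := by
        intro x hx
        rw [Finset.mem_inter] at hx
        rcases Finset.mem_union.mp (hMsub hx.1) with h | h
        · exact h
        · exact absurd hx.2 (Finset.disjoint_right.mp hdisj h)
      calc i ≤ (M ∩ V1).card := h1
        _ ≤ C1.card := Finset.card_le_card h2
        _ = alpha0On G V1 := hC1card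
    have key2 : j ≤ alpha0On G V2 := by
      obtain ⟨C2, hC2S, hC2cov, hC2card⟩ := alpha0On_exists G V2
      have hvc : IsVC G (C2 ∪ V1) := by
        intro a b hab
        by_cases ha : a ∈ V2
        · by_cases hb : b ∈ V2
          · exact (hC2cov a ha b hb hab).imp (fun h => Finset.mem_union_left _ h) (fun h => Finset.mem_union_left _ h)
          · have : b ∈ V1 := by
              have := Finset.mem_univ (α := Fin n) b
              rw [← huniv, Finset.mem_union] at this
              tauto
            exact Or.inr (Finset.mem_union_right _ this)
        · have : a ∈ V1 := by
            have := Finset.mem_univ (α := Fin n) a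
            rw [← huniv, Finset.mem_union] at this
            tauto
          exact Or.inl (Finset.mem_union_right _ this)
      obtain ⟨M, hMsub, hMmin⟩ := exists_min_vc G _ hvc
      have h1 : j ≤ (M ∩ V2).card := by rw [← hsumd M]; exact hd M hMmin
      have h2 : M ∩ V2 ⊆ C2 := by
        intro x hx
        rw [Finset.mem_inter] at hx
        rcases Finset.mem_union.mp (hMsub hx.1) with h | h
        · exact h
        · exact absurd hx.2 (Finset.disjoint_left.mp hdisj h)
      calc j ≤ (M ∩ V2).card := h1
        _ ≤ C2.card := Finset.card_le_card h2
        _ = alpha0On G V2 := hC2card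
    -- alpha0On V1 + alpha0On V2 ≤ alpha0On univ
    have key3 : alpha0On G V1 + alpha0On G V2 ≤ alpha0On G Finset.univ := by
      obtain ⟨C0, -, hcov0, hcard0⟩ := alpha0On_exists G Finset.univ
      have ha1 : alpha0On G V1 ≤ (C0 ∩ V1).card := by
        apply alpha0On_le G V1 _ Finset.inter_subset_right
        intro a ha b hb hab
        exact (hcov0 a (Finset.mem_univ a) b (Finset.mem_univ b) hab).imp
          (fun h => Finset.mem_inter.mpr ⟨h, ha⟩) (fun h => Finset.mem_inter.mpr ⟨h, hb⟩)
      have ha2 : alpha0On G V2 ≤ (C0 ∩ V2).card := by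
        apply alpha0On_le G V2 _ Finset.inter_subset_right
        intro a ha b hb hab
        exact (hcov0 a (Finset.mem_univ a) b (Finset.mem_univ b) hab).imp
          (fun h => Finset.mem_inter.mpr ⟨h, ha⟩) (fun h => Finset.mem_inter.mpr ⟨h, hb⟩)
      have hdisj' : Disjoint (C0 ∩ V1) (C0 ∩ V2) :=
        hdisj.mono Finset.inter_subset_right Finset.inter_subset_right
      have hun : (C0 ∩ V1) ∪ (C0 ∩ V2) = C0 := by
        rw [← Finset.inter_union_distrib_left, huniv, Finset.inter_univ]
      have : (C0 ∩ V1).card + (C0 ∩ V2).card = C0.card := by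
        rw [← Finset.card_union_of_disjoint hdisj', hun]
      omega
    exact ⟨V1, V2, hne1, hne2, hdisj, huniv, by omega⟩
  · rintro ⟨V1, V2, hne1, hne2, hdisj, huniv, hsum⟩
    obtain ⟨x0, hx0⟩ := hne1
    have hones : (fun _ : Fin n => (1:ℕ)) ≠ 0 := by
      intro h; exact absurd (congrFun h x0) one_ne_zero
    have hcoverbound : ∀ (V : Finset (Fin n)) (C : Finset (Fin n)), IsMinVC G C →
        alpha0On G V ≤ (C ∩ V).card := by
      intro V C hC
      apply alpha0On_le G V _ Finset.inter_subset_right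
      intro a ha b hb hab
      exact (hC.1 a b hab).imp (fun h => Finset.mem_inter.mpr ⟨h, ha⟩)
        (fun h => Finset.mem_inter.mpr ⟨h, hb⟩)
    refine ⟨⟨hones, ?_⟩, (fun x => if x ∈ V1 then 1 else 0),
      (fun x => if x ∈ V2 then 1 else 0), alpha0On G V1, alpha0On G V2, ⟨?_, ?_⟩, ⟨?_, ?_⟩, ?_, hsum⟩
    · intro C hC
      have := hcoverbound Finset.univ C hC
      simpa [Finset.inter_univ] using this
    · intro h
      exact absurd (congrFun h x0) (by simp [hx0])
    · intro C hC
      rw [sum_indicator]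
      exact hcoverbound V1 C hC
    · obtain ⟨y0, hy0⟩ := hne2
      intro h
      exact absurd (congrFun h y0) (by simp [hy0])
    · intro C hC
      rw [sum_indicator]
      exact hcoverbound V2 C hC
    · funext x
      have hx := Finset.mem_univ (α := Fin n) x
      rw [← huniv, Finset.mem_union] at hx
      have hd := Finset.disjoint_left.mp hdisj
      by_cases h1 : x ∈ V1
      · simp [h1, hd h1]
      · simp [h1, hx.resolve_left h1]
end

section
/- A finite simple graph G without isolated vertices is perfect if and only if every irreducible induced subgraph of G is a complete graph, i.e., for every nonempty subset S of the vertex set of G, if the induced subgraph G[S] is irreducible then G[S] is complete. -/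
/-- The clique number of a graph: the largest size of a clique. -/
noncomputable def cliqueNum {V : Type} (G : SimpleGraph V) : ℕ :=
  sSup {k : ℕ | ∃ t : Finset V, G.IsNClique k t}

/-- A graph is perfect if for every induced subgraph the chromatic number equals
the clique number. -/
def IsPerfect {V : Type} (G : SimpleGraph V) : Prop :=
  ∀ S : Set V, (G.induce S).chromaticNumber = (cliqueNum (G.induce S) : ℕ∞)

/-- The induced subgraph of `G` on the (nonempty) vertex set `S` is irreducible
if `S` cannot be partitioned into two nonempty sets `S1`, `S2` with
`α₀(G[S]) = α₀(G[S1]) + α₀(G[S2])`. -/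
def IrreducibleOn {n : ℕ} (G : SimpleGraph (Fin n)) (S : Finset (Fin n)) : Prop :=
  ¬ ∃ S1 S2 : Finset (Fin n), S1.Nonempty ∧ S2.Nonempty ∧
      Disjoint S1 S2 ∧ S1 ∪ S2 = S ∧
      alpha0On G S = alpha0On G S1 + alpha0On G S2

/-!
Since the complement of a vertex cover of `G[S]` is an independent set, `α₀(G[S]) = |S| - α(G[S])`;
so a partition of `S` witnesses reducibility exactly when it splits the clique number of the
complement `H = Gᶜ` additively. If `χ = ω` on every induced subgraph of `H` and `S` contains an
edge of `H`, splitting off the last colour class of an optimal colouring of `H[S]` is such a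
partition: irreducible sets are `H`-independent, i.e. complete in `G`. Conversely, if irreducible
sets are `H`-independent, `χ = ω` holds on every `H[S]` by induction, since `χ` is subadditive
along a reducing partition. So the right-hand side says that `Gᶜ` is perfect, and the weak perfect
graph theorem transfers this to `G`.

The weak perfect graph theorem follows from Lovász's characterisation of perfection by
`|S| ≤ α(S) ω(S)` for all `S`, which is symmetric under complementation. Its hard half is Gasparian's rank argument: a minimally imperfect
`S` carries `α ω + 1` independent sets and as many `ω`-cliques whose incidence matrices multiply
to `J - I`, which is invertible, so `α ω + 1 ≤ |S|`.
-/

open Finset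

lemma Matrix.card_le_of_mul_eq_ones_sub_one {ι κ R : Type*} [Fintype ι] [DecidableEq ι]
    [Fintype κ] [Field R] [CharZero R] {M : Matrix ι κ R} {Q : Matrix κ ι R}
    (h : M * Q = Matrix.of (fun _ _ => 1) - 1) (hι : 2 ≤ Fintype.card ι) :
    Fintype.card ι ≤ Fintype.card κ := by
  set N : R := (Fintype.card ι : R)
  set J : Matrix ι ι R := Matrix.of fun _ _ => 1
  have hJJ : J * J = N • J := by ext; simp [J, N, Matrix.mul_apply]
  have hN : N - 1 ≠ 0 := by
    rw [← Nat.cast_pred (by omega)]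
    exact Nat.cast_ne_zero.mpr (by omega)
  have hinv : (J - 1) * ((N - 1)⁻¹ • J - 1) = 1 := by
    rw [sub_mul, mul_sub, mul_sub, Matrix.mul_smul, hJJ, smul_smul, mul_one, one_mul,
      Matrix.one_mul]
    have : (N - 1)⁻¹ * N = (N - 1)⁻¹ + 1 := by
      field_simp
      ring
    rw [this, add_smul, one_smul]
    abel
  calc Fintype.card ι = (M * Q).rank := by
        rw [h, Matrix.rank_of_isUnit _ (IsUnit.of_mul_eq_one _ hinv)]
    _ ≤ M.rank := Matrix.rank_mul_le_left M Q
    _ ≤ Fintype.card κ := Matrix.rank_le_card_width M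

namespace Finset

variable {ι V : Type*} [Fintype ι] [DecidableEq ι] [DecidableEq V]

lemma card_le_card_of_card_inter_eq_ite {S : Finset V} {B K : ι → Finset V}
    (hK : ∀ i, K i ⊆ S) (hBK : ∀ i j, #(B i ∩ K j) = if i = j then 0 else 1)
    (hι : 2 ≤ Fintype.card ι) :
    Fintype.card ι ≤ #S := by
  let M : Matrix ι S ℚ := Matrix.of fun i v => if v.1 ∈ B i then 1 else 0
  let Q : Matrix S ι ℚ := Matrix.of fun v j => if v.1 ∈ K j then 1 else 0
  have hMQ : M * Q = Matrix.of (fun _ _ => 1) - 1 := by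
    ext i j
    have hentry : (M * Q) i j = #(B i ∩ K j) := by
      simp only [Matrix.mul_apply, M, Q, Matrix.of_apply, ite_zero_mul_ite_zero, mul_one]
      rw [sum_coe_sort S (fun v => if v ∈ B i ∧ v ∈ K j then (1 : ℚ) else 0), sum_boole]
      congr 2
      ext v
      simp only [mem_filter, mem_inter]
      exact ⟨fun h => h.2, fun h => ⟨hK j h.2, h⟩⟩
    rw [hentry, hBK, Matrix.sub_apply, Matrix.one_apply]
    split_ifs <;> simp
  simpa using Matrix.card_le_of_mul_eq_ones_sub_one hMQ hι

lemma card_inter_eq_ite_of_card_filter_mem_eq {B : ι → Finset V} {K : Finset V} {i : ι} {r : ℕ}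
    (hmult : ∀ v ∈ K, #{j | v ∈ B j} = r) (hcard : Fintype.card ι = r * #K + 1)
    (hle : ∀ j, #(B j ∩ K) ≤ 1) (hi : Disjoint (B i) K) (j : ι) :
    #(B j ∩ K) = if j = i then 0 else 1 := by
  have hsum : ∑ j, #(B j ∩ K) = r * #K :=
    calc ∑ j, #(B j ∩ K) = ∑ v ∈ K, #{j | v ∈ B j} := by
          simp only [inter_comm (B _) K, ← filter_mem_eq_inter, card_filter]
          exact sum_comm
      _ = r * #K := by rw [sum_congr rfl hmult, sum_const, smul_eq_mul, mul_comm]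
  have hrest : ∑ j ∈ univ.erase i, #(B j ∩ K) = ∑ j ∈ univ.erase i, (1 : ℕ) := by
    rw [← add_sum_erase _ _ (mem_univ i), disjoint_iff_inter_eq_empty.mp hi, card_empty,
      zero_add] at hsum
    rw [hsum, sum_const, card_erase_of_mem (mem_univ i), card_univ, hcard, smul_eq_mul, mul_one,
      Nat.add_sub_cancel]
  split_ifs with hji
  · exact hji ▸ card_eq_zero.mpr (disjoint_iff_inter_eq_empty.mp hi)
  · exact (sum_eq_sum_iff_of_le fun j _ => hle j).mp hrest j (mem_erase.mpr ⟨hji, mem_univ j⟩)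

end Finset

namespace SimpleGraph

variable {V : Type*} (G : SimpleGraph V)

structure IsColoringOn (S : Finset V) (c : V → ℕ) (m : ℕ) : Prop where
  lt : ∀ v ∈ S, c v < m
  ne_of_adj : ∀ u ∈ S, ∀ v ∈ S, G.Adj u v → c u ≠ c v

noncomputable def chromaticNumberOn (S : Finset V) : ℕ :=
  sInf {m | ∃ c, G.IsColoringOn S c m}

noncomputable def cliqueNumOn (S : Finset V) : ℕ :=
  sSup {k | ∃ K ⊆ S, G.IsNClique k K}

variable {G} {S T B K : Finset V} {c : V → ℕ} {m k : ℕ}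

lemma IsColoringOn.of_le (hc : G.IsColoringOn S c m) {m' : ℕ} (hm : m ≤ m') :
    G.IsColoringOn S c m' :=
  ⟨fun v hv => (hc.lt v hv).trans_le hm, hc.ne_of_adj⟩

lemma IsColoringOn.chromaticNumberOn_le (hc : G.IsColoringOn S c m) :
    G.chromaticNumberOn S ≤ m :=
  Nat.sInf_le ⟨c, hc⟩

lemma colorable_induce_iff :
    (G.induce (S : Set V)).Colorable m ↔ ∃ c, G.IsColoringOn S c m := by
  rw [colorable_iff_exists_bdd_nat_coloring]
  constructor
  · rintro ⟨C, hC⟩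
    classical
    refine ⟨fun v => if hv : v ∈ S then C ⟨v, hv⟩ else 0, fun v hv => ?_,
      fun u hu v hv huv => ?_⟩
    · simpa [hv] using hC ⟨v, hv⟩
    · simpa [hu, hv] using (C.valid (v := ⟨v, hv⟩) (w := ⟨u, hu⟩) huv.symm).symm
  · rintro ⟨c, hc⟩
    exact ⟨Coloring.mk (fun v => c v) fun {u v} huv => hc.ne_of_adj u u.2 v v.2 huv,
      fun v => hc.lt v v.2⟩

lemma exists_isColoringOn_chromaticNumberOn (G : SimpleGraph V) (S : Finset V) :
    ∃ c, G.IsColoringOn S c (G.chromaticNumberOn S) :=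
  Nat.sInf_mem (s := {m | ∃ c, G.IsColoringOn S c m})
    ⟨_, colorable_induce_iff.mp (G.induce (S : Set V)).colorable_of_fintype⟩

lemma chromaticNumberOn_empty : G.chromaticNumberOn ∅ = 0 :=
  Nat.le_zero.mp (IsColoringOn.chromaticNumberOn_le (c := fun _ => 0) ⟨by simp, by simp⟩)

lemma chromaticNumberOn_le_one (hS : G.IsIndepSet S) : G.chromaticNumberOn S ≤ 1 :=
  IsColoringOn.chromaticNumberOn_le (c := fun _ => 0)
    ⟨fun _ _ => one_pos, fun _ hu _ hv huv _ => hS hu hv huv.ne huv⟩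

lemma chromaticNumberOn_union_le [DecidableEq V] :
    G.chromaticNumberOn (S ∪ T) ≤ G.chromaticNumberOn S + G.chromaticNumberOn T := by
  obtain ⟨c, hc⟩ := G.exists_isColoringOn_chromaticNumberOn S
  obtain ⟨d, hd⟩ := G.exists_isColoringOn_chromaticNumberOn T
  set m := G.chromaticNumberOn S
  refine IsColoringOn.chromaticNumberOn_le (c := fun v => if v ∈ S then c v else m + d v)
    ⟨fun v hv => ?_, fun u hu v hv huv => ?_⟩
  · by_cases h : v ∈ S
    · simpa [h] using Nat.lt_add_right _ (hc.lt v h)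
    · simpa [h] using hd.lt v ((mem_union.mp hv).resolve_left h)
  · by_cases huS : u ∈ S <;> by_cases hvS : v ∈ S <;> simp only [huS, hvS, if_true, if_false]
    · exact hc.ne_of_adj u huS v hvS huv
    · have := hc.lt u huS
      omega
    · have := hc.lt v hvS
      omega
    · have := hd.ne_of_adj u ((mem_union.mp hu).resolve_left huS)
        v ((mem_union.mp hv).resolve_left hvS) huv
      omega

lemma chromaticNumberOn_le_sdiff_add_one [DecidableEq V] (hB : G.IsIndepSet (B : Set V)) :
    G.chromaticNumberOn S ≤ G.chromaticNumberOn (S \ B) + 1 :=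
  calc G.chromaticNumberOn S = G.chromaticNumberOn (S \ B ∪ S ∩ B) := by rw [sdiff_union_inter]
    _ ≤ G.chromaticNumberOn (S \ B) + G.chromaticNumberOn (S ∩ B) := chromaticNumberOn_union_le
    _ ≤ G.chromaticNumberOn (S \ B) + 1 := add_le_add_right
        (chromaticNumberOn_le_one (Set.Pairwise.mono (coe_subset.mpr inter_subset_right) hB)) _

lemma cliqueNumOn_bddAbove (G : SimpleGraph V) (S : Finset V) :
    BddAbove {k | ∃ K ⊆ S, G.IsNClique k K} :=
  ⟨#S, fun _ ⟨_, hKS, hK⟩ => hK.card_eq ▸ card_le_card hKS⟩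

lemma exists_isNClique_cliqueNumOn (G : SimpleGraph V) (S : Finset V) :
    ∃ K ⊆ S, G.IsNClique (G.cliqueNumOn S) K :=
  Nat.sSup_mem (s := {k | ∃ K ⊆ S, G.IsNClique k K}) ⟨0, ∅, empty_subset S, by simp⟩
    (G.cliqueNumOn_bddAbove S)

lemma IsClique.card_le_cliqueNumOn (hK : G.IsClique (K : Set V)) (hKS : K ⊆ S) :
    #K ≤ G.cliqueNumOn S :=
  le_csSup (G.cliqueNumOn_bddAbove S) ⟨K, hKS, hK, rfl⟩

lemma exists_isNClique_of_le_cliqueNumOn (h : k ≤ G.cliqueNumOn S) :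
    ∃ K ⊆ S, G.IsNClique k K := by
  obtain ⟨L, hLS, hL⟩ := G.exists_isNClique_cliqueNumOn S
  obtain ⟨K, hKL, rfl⟩ := exists_subset_card_eq (hL.card_eq ▸ h)
  exact ⟨K, hKL.trans hLS, hL.isClique.subset (by simpa using hKL), rfl⟩

lemma cliqueNumOn_le_card : G.cliqueNumOn S ≤ #S :=
  have ⟨_, hKS, hK⟩ := G.exists_isNClique_cliqueNumOn S
  hK.card_eq ▸ card_le_card hKS

lemma cliqueNumOn_mono (hST : S ⊆ T) : G.cliqueNumOn S ≤ G.cliqueNumOn T :=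
  have ⟨_, hKS, hK⟩ := G.exists_isNClique_cliqueNumOn S
  hK.card_eq ▸ hK.isClique.card_le_cliqueNumOn (hKS.trans hST)

lemma cliqueNumOn_pos (hS : S.Nonempty) : 0 < G.cliqueNumOn S :=
  have ⟨v, hv⟩ := hS
  IsClique.card_le_cliqueNumOn (K := {v}) (by simp) (singleton_subset_iff.mpr hv)

lemma cliqueNumOn_union_le [DecidableEq V] :
    G.cliqueNumOn (S ∪ T) ≤ G.cliqueNumOn S + G.cliqueNumOn T := by
  obtain ⟨K, hKST, hK⟩ := G.exists_isNClique_cliqueNumOn (S ∪ T)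
  have hKS := hK.isClique.subset (coe_subset.mpr (inter_subset_left (s₂ := S)))
  have hKT := hK.isClique.subset (coe_subset.mpr (inter_subset_left (s₂ := T)))
  calc G.cliqueNumOn (S ∪ T) = #K := hK.card_eq.symm
    _ = #(K ∩ S ∪ K ∩ T) := by rw [← inter_union_distrib_left, inter_eq_left.mpr hKST]
    _ ≤ #(K ∩ S) + #(K ∩ T) := card_union_le _ _
    _ ≤ G.cliqueNumOn S + G.cliqueNumOn T := add_le_add
        (hKS.card_le_cliqueNumOn inter_subset_right) (hKT.card_le_cliqueNumOn inter_subset_right)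

lemma IsIndepSet.card_inter_le_one [DecidableEq V] (hB : G.IsIndepSet (B : Set V))
    (hK : G.IsClique (K : Set V)) : #(B ∩ K) ≤ 1 :=
  card_le_one.mpr fun _ hu _ hv => by_contra fun huv =>
    hB (mem_inter.mp hu).1 (mem_inter.mp hv).1 huv
      (hK (mem_inter.mp hu).2 (mem_inter.mp hv).2 huv)

lemma cliqueNumOn_le_chromaticNumberOn : G.cliqueNumOn S ≤ G.chromaticNumberOn S := by
  obtain ⟨K, hKS, hK⟩ := G.exists_isNClique_cliqueNumOn S
  obtain ⟨c, hc⟩ := G.exists_isColoringOn_chromaticNumberOn S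
  rw [← hK.card_eq, ← card_range (G.chromaticNumberOn S)]
  refine card_le_card_of_injOn c (fun v hv => mem_range.mpr (hc.lt v (hKS hv))) ?_
  intro u hu v hv hcuv
  by_contra huv
  exact hc.ne_of_adj u (hKS hu) v (hKS hv) (hK.isClique hu hv huv) hcuv

lemma card_le_chromaticNumberOn_mul_cliqueNumOn_compl :
    #S ≤ G.chromaticNumberOn S * Gᶜ.cliqueNumOn S := by
  classical
  obtain ⟨c, hc⟩ := G.exists_isColoringOn_chromaticNumberOn S
  have hclass : ∀ j ∈ S.image c, #{v ∈ S | c v = j} ≤ Gᶜ.cliqueNumOn S := by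
    refine fun j _ => IsClique.card_le_cliqueNumOn ?_ (filter_subset _ S)
    intro u hu v hv huv
    simp only [mem_coe, mem_filter] at hu hv
    exact ⟨huv, fun hadj => hc.ne_of_adj u hu.1 v hv.1 hadj (hu.2.trans hv.2.symm)⟩
  have himage : S.image c ⊆ range (G.chromaticNumberOn S) := fun j hj => by
    obtain ⟨v, hv, rfl⟩ := mem_image.mp hj
    exact mem_range.mpr (hc.lt v hv)
  calc #S ≤ Gᶜ.cliqueNumOn S * #(S.image c) := card_le_mul_card_image S _ hclass
    _ ≤ Gᶜ.cliqueNumOn S * G.chromaticNumberOn S := by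
        gcongr
        simpa using card_le_card himage
    _ = G.chromaticNumberOn S * Gᶜ.cliqueNumOn S := mul_comm _ _

lemma chromaticNumber_induce (G : SimpleGraph V) (S : Finset V) :
    (G.induce (S : Set V)).chromaticNumber = G.chromaticNumberOn S := by
  obtain ⟨c, hc⟩ := G.exists_isColoringOn_chromaticNumberOn S
  refine le_antisymm (chromaticNumber_le_iff_colorable.mpr (colorable_induce_iff.mpr ⟨c, hc⟩))
    (le_chromaticNumber_iff_colorable.mpr fun m hm => ?_)
  obtain ⟨d, hd⟩ := colorable_induce_iff.mp hm
  exact_mod_cast hd.chromaticNumberOn_le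

lemma cliqueNum_induce (G : SimpleGraph V) (S : Finset V) :
    (G.induce (S : Set V)).cliqueNum = G.cliqueNumOn S := by
  classical
  refine congrArg sSup (Set.ext fun k => ⟨fun ⟨t, ht⟩ => ?_, fun ⟨K, hKS, hK⟩ => ?_⟩)
  · refine ⟨_, fun v hv => ?_, (isNClique_induce_iff _ t k).mp ht⟩
    obtain ⟨u, -, rfl⟩ := mem_map.mp hv
    exact u.2
  · refine ⟨K.subtype (· ∈ (S : Set V)), (isNClique_induce_iff _ _ k).mpr ?_⟩
    rwa [subtype_map, filter_true_of_mem fun v hv => mem_coe.mpr (hKS hv)]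

theorem isPerfect_iff_forall_chromaticNumberOn_eq {W : Type} [Finite W] (G : SimpleGraph W) :
    IsPerfect G ↔ ∀ S : Finset W, G.chromaticNumberOn S = G.cliqueNumOn S := by
  have hω (S : Finset W) : _root_.cliqueNum (G.induce (S : Set W)) = G.cliqueNumOn S :=
    G.cliqueNum_induce S
  refine ⟨fun h S => ?_, fun h S => ?_⟩
  · have := h S
    rwa [chromaticNumber_induce, hω, Nat.cast_inj] at this
  · obtain ⟨S, rfl⟩ := S.toFinite.exists_finset_coe
    rw [chromaticNumber_induce, hω, h S]

lemma cliqueNumOn_le_cliqueNumOn_sdiff_of_minimal [DecidableEq V]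
    (hmin : ∀ T ⊂ S, G.chromaticNumberOn T = G.cliqueNumOn T)
    (hS : G.chromaticNumberOn S ≠ G.cliqueNumOn S) (hB : G.IsIndepSet (B : Set V)) :
    G.cliqueNumOn S ≤ G.cliqueNumOn (S \ B) := by
  rcases (sdiff_subset : S \ B ⊆ S).eq_or_ssubset with h | h
  · rw [h]
  · have := hmin _ h
    have := chromaticNumberOn_le_sdiff_add_one (S := S) hB
    have := G.cliqueNumOn_le_chromaticNumberOn (S := S)
    omega

/-- Gasparian's `α ω + 1` independent sets, for `A` a maximum independent set of `S` and `c a` an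
`ω`-colouring of `S \ {a}`. -/
def colorClassFamily [DecidableEq V] (S A : Finset V) (c : V → V → ℕ) (m : ℕ) :
    Option (A × Fin m) → Finset V
  | none => A
  | some (a, j) => {v ∈ S \ {a.1} | c a v = j}

lemma isIndepSet_colorClassFamily [DecidableEq V] {A : Finset V} {c : V → V → ℕ}
    (hA : G.IsIndepSet (A : Set V)) (hc : ∀ a ∈ A, G.IsColoringOn (S \ {a}) (c a) m) :
    ∀ i, G.IsIndepSet (colorClassFamily S A c m i : Set V)
  | none => hA
  | some (a, _) => fun _ hu _ hv _ huv => by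
    simp only [colorClassFamily, mem_coe, mem_filter] at hu hv
    exact (hc a a.2).ne_of_adj _ hu.1 _ hv.1 huv (hu.2.trans hv.2.symm)

lemma card_filter_mem_colorClassFamily [DecidableEq V] {A : Finset V} {c : V → V → ℕ}
    (hc : ∀ a ∈ A, ∀ v ∈ S \ {a}, c a v < m) {v : V} (hv : v ∈ S) :
    #{i | v ∈ colorClassFamily S A c m i} = #A := by
  have hrow (a : A) :
      ∑ j : Fin m, (if v ∈ colorClassFamily S A c m (some (a, j)) then 1 else 0) =
        if v = a then 0 else 1 := by
    split_ifs with hva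
    · simp [colorClassFamily, hva]
    · rw [Fintype.sum_eq_single ⟨c a v, hc a a.2 v (by simp [hv, hva])⟩]
      · simp [colorClassFamily, hv, hva]
      · intro j hj
        simp only [colorClassFamily, mem_filter, ite_eq_right_iff]
        exact fun h => absurd (Fin.ext h.2.symm) hj
  rw [card_filter, Fintype.sum_option, Fintype.sum_prod_type, Fintype.sum_congr _ _ hrow,
    sum_coe_sort A (fun a => if v = a then 0 else 1)]
  simp only [colorClassFamily]
  split_ifs with hvA
  · simp only [sum_ite, filter_ne, hvA, if_true, sum_const_zero, sum_const, card_erase_of_mem,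
      smul_eq_mul, mul_one]
    have := card_pos.mpr ⟨v, hvA⟩
    omega
  · simp [sum_ite, filter_ne, hvA]

theorem cliqueNumOn_compl_mul_cliqueNumOn_lt_card [DecidableEq V]
    (hmin : ∀ T ⊂ S, G.chromaticNumberOn T = G.cliqueNumOn T)
    (hS : G.chromaticNumberOn S ≠ G.cliqueNumOn S) :
    Gᶜ.cliqueNumOn S * G.cliqueNumOn S < #S := by
  obtain rfl | hSne := S.eq_empty_or_nonempty
  · exact absurd (chromaticNumberOn_empty.trans (Nat.le_zero.mp cliqueNumOn_le_card).symm) hS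
  obtain ⟨A, hAS, hA⟩ := Gᶜ.exists_isNClique_cliqueNumOn S
  have hcol : ∀ a ∈ A, ∃ c, G.IsColoringOn (S \ {a}) c (G.cliqueNumOn S) := fun a ha => by
    obtain ⟨c, hc⟩ := G.exists_isColoringOn_chromaticNumberOn (S \ {a})
    refine ⟨c, hc.of_le ?_⟩
    rw [hmin _ (sdiff_ssubset (singleton_subset_iff.mpr (hAS ha)) (singleton_nonempty a))]
    exact cliqueNumOn_mono sdiff_subset
  choose! c hc using hcol
  set B := colorClassFamily S A c (G.cliqueNumOn S)
  have hB := isIndepSet_colorClassFamily ((isClique_compl G).1 hA.isClique) hc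
  choose K hKB hK using fun i => exists_isNClique_of_le_cliqueNumOn
    (cliqueNumOn_le_cliqueNumOn_sdiff_of_minimal hmin hS (hB i))
  have hKS i : K i ⊆ S := (subset_sdiff.mp (hKB i)).1
  have hcard : Fintype.card (Option (A × Fin (G.cliqueNumOn S))) =
      Gᶜ.cliqueNumOn S * G.cliqueNumOn S + 1 := by
    rw [Fintype.card_option, Fintype.card_prod, Fintype.card_coe, Fintype.card_fin, hA.card_eq]
  have hBK i j : #(B i ∩ K j) = if i = j then 0 else 1 :=
    card_inter_eq_ite_of_card_filter_mem_eq
      (fun v hv => hA.card_eq ▸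
        card_filter_mem_colorClassFamily (fun a ha => (hc a ha).lt) (hKS j hv))
      (by rw [hcard, (hK j).card_eq]) (fun i => (hB i).card_inter_le_one (hK j).isClique)
      (subset_sdiff.mp (hKB j)).2.symm i
  have hαω := Nat.mul_pos (Gᶜ.cliqueNumOn_pos hSne) (G.cliqueNumOn_pos hSne)
  have := card_le_card_of_card_inter_eq_ite hKS hBK (by omega)
  omega

theorem forall_chromaticNumberOn_eq_iff_card_le [DecidableEq V] :
    (∀ S, G.chromaticNumberOn S = G.cliqueNumOn S) ↔
      ∀ S, #S ≤ Gᶜ.cliqueNumOn S * G.cliqueNumOn S := by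
  refine ⟨fun h S => ?_, fun h S => ?_⟩
  · rw [← h S, mul_comm]
    exact card_le_chromaticNumberOn_mul_cliqueNumOn_compl
  · induction S using strongInduction with
    | H S ih =>
      by_contra hS
      exact (cliqueNumOn_compl_mul_cliqueNumOn_lt_card ih hS).not_ge (h S)

theorem forall_chromaticNumberOn_compl_eq_iff [DecidableEq V] :
    (∀ S, Gᶜ.chromaticNumberOn S = Gᶜ.cliqueNumOn S) ↔
      ∀ S, G.chromaticNumberOn S = G.cliqueNumOn S := by
  simp only [forall_chromaticNumberOn_eq_iff_card_le, compl_compl, mul_comm]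

def IsCliqueReducibleOn [DecidableEq V] (G : SimpleGraph V) (S : Finset V) : Prop :=
  ∃ S₁ S₂ : Finset V, S₁.Nonempty ∧ S₂.Nonempty ∧ Disjoint S₁ S₂ ∧ S₁ ∪ S₂ = S ∧
    G.cliqueNumOn S = G.cliqueNumOn S₁ + G.cliqueNumOn S₂

lemma isCliqueReducibleOn_of_chromaticNumberOn_eq [DecidableEq V]
    (h : G.chromaticNumberOn S = G.cliqueNumOn S) (hS : ¬ G.IsIndepSet (S : Set V)) :
    G.IsCliqueReducibleOn S := by
  obtain ⟨i, hi, j, hj, -, hadj⟩ : ∃ i ∈ S, ∃ j ∈ S, i ≠ j ∧ G.Adj i j := by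
    simpa [Set.Pairwise] using hS
  obtain ⟨c, hc⟩ := G.exists_isColoringOn_chromaticNumberOn S
  set m := G.chromaticNumberOn S
  have hm : 0 < m := (hc.lt i hi).trans_le' (Nat.zero_le _)
  have hpred : ∀ T ⊆ S, (∀ v ∈ T, c v ≠ m - 1) → G.chromaticNumberOn T ≤ m - 1 :=
    fun T hT hne => IsColoringOn.chromaticNumberOn_le
      ⟨fun v hv => by have := hc.lt v (hT hv); have := hne v hv; omega,
        fun u hu v hv => hc.ne_of_adj u (hT hu) v (hT hv)⟩
  set S₁ := {v ∈ S | c v = m - 1}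
  set S₂ := {v ∈ S | c v ≠ m - 1}
  have hS₁ : S₁.Nonempty := by
    by_contra h₁
    have := hpred S subset_rfl fun v hv hcv => h₁ ⟨v, mem_filter.mpr ⟨hv, hcv⟩⟩
    omega
  have hS₂ : S₂.Nonempty := by
    by_cases hci : c i = m - 1
    · exact ⟨j, mem_filter.mpr ⟨hj, hci ▸ (hc.ne_of_adj i hi j hj hadj).symm⟩⟩
    · exact ⟨i, mem_filter.mpr ⟨hi, hci⟩⟩
  have hω₁ : G.cliqueNumOn S₁ ≤ 1 := cliqueNumOn_le_chromaticNumberOn.trans <|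
    chromaticNumberOn_le_one fun u hu v hv _ huv => by
      simp only [mem_coe, mem_filter, S₁] at hu hv
      exact hc.ne_of_adj u hu.1 v hv.1 huv (hu.2.trans hv.2.symm)
  have hω₂ : G.cliqueNumOn S₂ ≤ m - 1 := cliqueNumOn_le_chromaticNumberOn.trans <|
    hpred S₂ (filter_subset _ S) fun v hv => (mem_filter.mp hv).2
  have hunion : S₁ ∪ S₂ = S := filter_union_filter_not_eq _ S
  have := cliqueNumOn_pos (G := G) hS₁
  have := hunion ▸ G.cliqueNumOn_union_le (S := S₁) (T := S₂)
  exact ⟨S₁, S₂, hS₁, hS₂, disjoint_filter_filter_not S S _, hunion, by omega⟩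

lemma chromaticNumberOn_eq_of_forall_isCliqueReducibleOn [DecidableEq V]
    (h : ∀ S, ¬ G.IsCliqueReducibleOn S → G.IsIndepSet (S : Set V)) (S : Finset V) :
    G.chromaticNumberOn S = G.cliqueNumOn S := by
  induction S using strongInduction with
  | H S ih =>
    refine le_antisymm ?_ cliqueNumOn_le_chromaticNumberOn
    by_cases hred : G.IsCliqueReducibleOn S
    · obtain ⟨S₁, S₂, hS₁, hS₂, hdisj, rfl, hω⟩ := hred
      calc G.chromaticNumberOn (S₁ ∪ S₂)
          ≤ G.chromaticNumberOn S₁ + G.chromaticNumberOn S₂ := chromaticNumberOn_union_le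
        _ = G.cliqueNumOn (S₁ ∪ S₂) := by
          rw [hω, ih S₁ (union_comm S₂ S₁ ▸ hdisj.symm.right_lt_sup_of_left_ne_bot hS₂.ne_empty),
            ih S₂ (hdisj.right_lt_sup_of_left_ne_bot hS₁.ne_empty)]
    · obtain rfl | hne := S.eq_empty_or_nonempty
      · rw [chromaticNumberOn_empty]
        exact Nat.zero_le _
      · exact (chromaticNumberOn_le_one (h S hred)).trans (cliqueNumOn_pos hne)

theorem forall_chromaticNumberOn_eq_iff_isIndepSet [DecidableEq V] :
    (∀ S, G.chromaticNumberOn S = G.cliqueNumOn S) ↔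
      ∀ S, ¬ G.IsCliqueReducibleOn S → G.IsIndepSet (S : Set V) :=
  ⟨fun h S hS => not_imp_comm.mp (isCliqueReducibleOn_of_chromaticNumberOn_eq (h S)) hS,
    chromaticNumberOn_eq_of_forall_isCliqueReducibleOn⟩

end SimpleGraph

lemma alpha0On_add_cliqueNumOn_compl {n : ℕ} (G : SimpleGraph (Fin n)) (S : Finset (Fin n)) :
    alpha0On G S + Gᶜ.cliqueNumOn S = #S := by
  have hcover (C : Finset (Fin n)) : (∀ i ∈ S, ∀ j ∈ S, G.Adj i j → i ∈ C ∨ j ∈ C) ↔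
      Gᶜ.IsClique (↑(S \ C) : Set (Fin n)) := by
    refine ⟨fun h u hu v hv huv => ⟨huv, fun hadj => ?_⟩, fun h i hi j hj hadj => ?_⟩
    · simp only [mem_coe, mem_sdiff] at hu hv
      exact (h u hu.1 v hv.1 hadj).elim hu.2 hv.2
    · by_contra! hij
      exact (h (by simp [hi, hij.1]) (by simp [hj, hij.2]) hadj.ne).2 hadj
  obtain ⟨A, hAS, hA⟩ := Gᶜ.exists_isNClique_cliqueNumOn S
  have hle : alpha0On G S ≤ #(S \ A) := Nat.sInf_le ⟨S \ A, sdiff_subset,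
    (hcover _).mpr (by rw [Finset.sdiff_sdiff_eq_self hAS]; exact hA.isClique), rfl⟩
  obtain ⟨C, hCS, hC, hCcard⟩ := Nat.sInf_mem (s := {k | ∃ C : Finset (Fin n), C ⊆ S ∧
      (∀ i ∈ S, ∀ j ∈ S, G.Adj i j → i ∈ C ∨ j ∈ C) ∧ #C = k})
    ⟨#S, S, subset_rfl, fun i hi _ _ _ => Or.inl hi, rfl⟩
  have hge := ((hcover C).mp hC).card_le_cliqueNumOn sdiff_subset
  rw [card_sdiff_of_subset hAS, hA.card_eq] at hle
  rw [card_sdiff_of_subset hCS] at hge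
  have := card_le_card hCS
  have := Gᶜ.cliqueNumOn_le_card (S := S)
  unfold alpha0On at hle ⊢
  omega

lemma alpha0On_union_eq_iff {n : ℕ} (G : SimpleGraph (Fin n)) {S₁ S₂ : Finset (Fin n)}
    (h : Disjoint S₁ S₂) :
    alpha0On G (S₁ ∪ S₂) = alpha0On G S₁ + alpha0On G S₂ ↔
      Gᶜ.cliqueNumOn (S₁ ∪ S₂) = Gᶜ.cliqueNumOn S₁ + Gᶜ.cliqueNumOn S₂ := by
  have := alpha0On_add_cliqueNumOn_compl G (S₁ ∪ S₂)
  have := alpha0On_add_cliqueNumOn_compl G S₁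
  have := alpha0On_add_cliqueNumOn_compl G S₂
  have := card_union_of_disjoint h
  have := Gᶜ.cliqueNumOn_union_le (S := S₁) (T := S₂)
  omega

lemma irreducibleOn_iff_not_isCliqueReducibleOn {n : ℕ} (G : SimpleGraph (Fin n))
    (S : Finset (Fin n)) : IrreducibleOn G S ↔ ¬ Gᶜ.IsCliqueReducibleOn S := by
  refine not_congr ⟨?_, ?_⟩ <;> rintro ⟨S₁, S₂, h₁, h₂, hd, rfl, h⟩
  · exact ⟨S₁, S₂, h₁, h₂, hd, rfl, (alpha0On_union_eq_iff G hd).mp h⟩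
  · exact ⟨S₁, S₂, h₁, h₂, hd, rfl, (alpha0On_union_eq_iff G hd).mpr h⟩

theorem perfect_iff_irreducible_induced_subgraphs_complete_general {n : ℕ}
    (G : SimpleGraph (Fin n)) :
    IsPerfect G ↔
      ∀ S : Finset (Fin n), S.Nonempty → IrreducibleOn G S →
        ∀ i ∈ S, ∀ j ∈ S, i ≠ j → G.Adj i j := by
  rw [SimpleGraph.isPerfect_iff_forall_chromaticNumberOn_eq,
    ← SimpleGraph.forall_chromaticNumberOn_compl_eq_iff,
    SimpleGraph.forall_chromaticNumberOn_eq_iff_isIndepSet]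
  simp only [← irreducibleOn_iff_not_isCliqueReducibleOn, SimpleGraph.isIndepSet_compl]
  refine forall_congr' fun S => ⟨fun h _ hS => h hS, fun h hS => ?_⟩
  obtain rfl | hne := S.eq_empty_or_nonempty
  · simp
  · exact h hne hS

theorem perfect_iff_irreducible_induced_subgraphs_complete {n : ℕ}
    (G : SimpleGraph (Fin n)) (hG : ∀ i : Fin n, ∃ j : Fin n, G.Adj i j) :
    IsPerfect G ↔
      ∀ S : Finset (Fin n), S.Nonempty → IrreducibleOn G S →
        ∀ i ∈ S, ∀ j ∈ S, i ≠ j → G.Adj i j :=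
  perfect_iff_irreducible_induced_subgraphs_complete_general G
end

section
/- Let G be a finite simple graph on vertex set {x_1,…,x_n} without isolated vertices and let H be a graph obtained from G by adding one new vertex v and some new edges joining v to vertices of G (so V(H) = V(G) ∪ {v} and E(H) consists of E(G) together with edges from v to a subset of V(G)). If a = (1,…,1) ∈ ℕ^n is an irreducible α_0(G)-cover of the blocker Υ(G) and α_0(H) = α_0(G) + 1, then a' = (1,…,1) ∈ ℕ^{n+1} is an irreducible α_0(H)-cover of the blocker Υ(H). -/
/-
If `(1,…,1) = c + d` on `H` splits the `α₀(H)`-cover into an `i`-cover and a `j`-cover, exactly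
one of `c`, `d` takes the value `1` at the cone vertex `v`, say `d`. For a minimal vertex cover
`C` of `G`, the set `C ∪ {v}` covers `H`, so restricting to `G` turns `c` into an `i`-cover and
`d` into a `(j - 1)`-cover of `Υ(G)`. Their sum is `(1,…,1)` and `i + (j - 1) = α₀(G)`, so this
splits `(1,…,1)` on `G`. Both restrictions are nonzero: `c ≠ 0` vanishes at `v`, and `j ≥ 1`
(otherwise `i = α₀(G) + 1` would exceed the size of a minimum vertex cover of `G`), so `d` cannot
vanish on a minimal vertex cover of `H` avoiding `v`.
-/

open Finset

namespace IsVC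

variable {m : ℕ} {G : SimpleGraph (Fin m)} {C : Finset (Fin m)}

theorem exists_isMinVC_subset (h : IsVC G C) : ∃ D ⊆ C, IsMinVC G D := by
  induction C using Finset.strongInduction with
  | H C ih =>
    by_cases hmin : ∀ D, D ⊂ C → ¬ IsVC G D
    · exact ⟨C, subset_rfl, h, hmin⟩
    · push Not at hmin
      obtain ⟨D, hDC, hD⟩ := hmin
      obtain ⟨E, hED, hE⟩ := ih D hDC hD
      exact ⟨E, hED.trans hDC.subset, hE⟩

theorem alpha0On_univ_le_card (h : IsVC G C) : alpha0On G univ ≤ C.card :=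
  Nat.sInf_le ⟨C, subset_univ C, fun i _ j _ hij => h i j hij, rfl⟩

end IsVC

section VertexCover

variable {m : ℕ} (G : SimpleGraph (Fin m))

theorem exists_isMinVC_card_eq_alpha0On :
    ∃ C, IsMinVC G C ∧ C.card = alpha0On G univ := by
  have hne : {k | ∃ C : Finset (Fin m), C ⊆ univ ∧
      (∀ i ∈ univ, ∀ j ∈ univ, G.Adj i j → i ∈ C ∨ j ∈ C) ∧ C.card = k}.Nonempty :=
    ⟨_, univ, subset_rfl, fun i _ _ _ _ => Or.inl (mem_univ i), rfl⟩
  obtain ⟨C, -, hC, hcard⟩ := Nat.sInf_mem hne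
  replace hcard : C.card = alpha0On G univ := hcard
  have hCvc : IsVC G C := fun i j hij => hC i (mem_univ i) j (mem_univ j) hij
  refine ⟨C, ⟨hCvc, fun D hDC hD => ?_⟩, hcard⟩
  have := hD.alpha0On_univ_le_card
  have := card_lt_card hDC
  omega

theorem exists_isMinVC_not_mem (v : Fin m) : ∃ D, IsMinVC G D ∧ v ∉ D := by
  have hvc : IsVC G (univ.erase v) := fun i j hij => by
    by_cases hi : i = v
    · exact Or.inr (mem_erase.2 ⟨hi ▸ hij.ne', mem_univ j⟩)
    · exact Or.inl (mem_erase.2 ⟨hi, mem_univ i⟩)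
  obtain ⟨D, hDv, hD⟩ := hvc.exists_isMinVC_subset
  exact ⟨D, hD, fun hv => (mem_erase.1 (hDv hv)).1 rfl⟩

theorem isUpsCover_one_alpha0On [NeZero m] : IsUpsCover G (fun _ => 1) (alpha0On G univ) :=
  ⟨fun h => one_ne_zero (congrFun h 0), fun C hC => by
    simpa using hC.1.alpha0On_univ_le_card⟩

end VertexCover

section Cone

variable {n : ℕ} {G : SimpleGraph (Fin n)} {H : SimpleGraph (Fin (n + 1))}

theorem IsVC.insert_last_map_castSucc (hHG : ∀ i j, H.Adj i.castSucc j.castSucc → G.Adj i j)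
    {C : Finset (Fin n)} (hC : IsVC G C) :
    IsVC H (insert (Fin.last n) (C.map Fin.castSuccEmb)) := by
  intro a b hab
  induction a using Fin.lastCases with
  | last => exact Or.inl (mem_insert_self _ _)
  | cast i =>
    induction b using Fin.lastCases with
    | last => exact Or.inr (mem_insert_self _ _)
    | cast j => simpa using hC i j (hHG i j hab)

theorem sum_insert_last_map_castSucc (e : Fin (n + 1) → ℕ) (C : Finset (Fin n)) :
    ∑ x ∈ insert (Fin.last n) (C.map Fin.castSuccEmb), e x =
      ∑ x ∈ C, e x.castSucc + e (Fin.last n) := by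
  rw [sum_insert (by simp), sum_map, add_comm]
  rfl

namespace IsUpsCover

variable {e : Fin (n + 1) → ℕ} {b : ℕ}

theorem le_sum_comp_castSucc_add (hHG : ∀ i j, H.Adj i.castSucc j.castSucc → G.Adj i j)
    (he : IsUpsCover H e b) {C : Finset (Fin n)} (hC : IsMinVC G C) :
    b ≤ ∑ x ∈ C, e x.castSucc + e (Fin.last n) := by
  obtain ⟨D, hDC, hD⟩ := (hC.1.insert_last_map_castSucc hHG).exists_isMinVC_subset
  calc b ≤ ∑ x ∈ D, e x := he.2 D hD
    _ ≤ _ := sum_le_sum_of_subset hDC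
    _ = _ := sum_insert_last_map_castSucc e C

theorem comp_castSucc (hHG : ∀ i j, H.Adj i.castSucc j.castSucc → G.Adj i j)
    (he : IsUpsCover H e b) (hne : e ∘ Fin.castSucc ≠ 0) :
    IsUpsCover G (e ∘ Fin.castSucc) (b - e (Fin.last n)) :=
  ⟨hne, fun C hC => by
    have := he.le_sum_comp_castSucc_add hHG hC
    simp only [Function.comp_apply]
    omega⟩

theorem comp_castSucc_ne_zero (he : IsUpsCover H e b) (hb : 0 < b) : e ∘ Fin.castSucc ≠ 0 := by
  intro h0
  obtain ⟨D, hD, hvD⟩ := exists_isMinVC_not_mem H (Fin.last n)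
  have hzero : ∑ x ∈ D, e x = 0 := sum_eq_zero fun x hx => by
    induction x using Fin.lastCases with
    | last => exact absurd hx hvD
    | cast i => exact congrFun h0 i
  have := he.2 D hD
  omega

end IsUpsCover

theorem exists_split_of_cone_split (hHG : ∀ i j, H.Adj i.castSucc j.castSucc → G.Adj i j)
    {c d : Fin (n + 1) → ℕ} {i j : ℕ} (hc : IsUpsCover H c i) (hd : IsUpsCover H d j)
    (hcd : (fun _ => 1) = c + d) (hcv : c (Fin.last n) = 0)
    (hij : alpha0On G univ + 1 = i + j) :
    ∃ (c' d' : Fin n → ℕ) (i' j' : ℕ), IsUpsCover G c' i' ∧ IsUpsCover G d' j' ∧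
      (fun _ => 1) = c' + d' ∧ alpha0On G univ = i' + j' := by
  have hpt (x : Fin (n + 1)) : c x + d x = 1 := (congrFun hcd x).symm
  have hdv : d (Fin.last n) = 1 := by have := hpt (Fin.last n); omega
  obtain ⟨C₀, hC₀, hcard⟩ := exists_isMinVC_card_eq_alpha0On G
  have hj : 0 < j := by
    have hsum : ∑ x ∈ C₀, c x.castSucc ≤ C₀.card := by
      simpa using sum_le_card_nsmul C₀ (fun x => c x.castSucc) 1 fun x _ => by
        have := hpt x.castSucc; omega
    have := hc.le_sum_comp_castSucc_add hHG hC₀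
    omega
  have hc_ne : c ∘ Fin.castSucc ≠ 0 := fun h0 => hc.1 <| funext fun x => by
    induction x using Fin.lastCases with
    | last => exact hcv
    | cast x => exact congrFun h0 x
  refine ⟨c ∘ Fin.castSucc, d ∘ Fin.castSucc, i, j - 1, ?_, ?_, ?_, by omega⟩
  · simpa [hcv] using hc.comp_castSucc hHG hc_ne
  · simpa [hdv] using hd.comp_castSucc hHG (hd.comp_castSucc_ne_zero hj)
  · funext x
    exact congrFun hcd x.castSucc

end Cone

theorem cone_construction_irreducible_cover_general {n : ℕ}
    (G : SimpleGraph (Fin n))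
    (H : SimpleGraph (Fin (n + 1)))
    -- `H` is obtained from `G` by adding the new vertex `Fin.last n` and some
    -- edges joining it to vertices of `G`: the edges of `H` among the old
    -- vertices are exactly the edges of `G`.
    (hHG : ∀ i j : Fin n, H.Adj i.castSucc j.castSucc ↔ G.Adj i j)
    (h1 : IsIrredUpsCover G (fun _ => 1) (alpha0On G Finset.univ))
    (hα : alpha0On H Finset.univ = alpha0On G Finset.univ + 1) :
    IsIrredUpsCover H (fun _ => 1) (alpha0On H Finset.univ) := by
  refine ⟨isUpsCover_one_alpha0On H, ?_⟩
  rintro ⟨c, d, i, j, hc, hd, hcd, hij⟩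
  have hHG' : ∀ i j, H.Adj i.castSucc j.castSucc → G.Adj i j := fun i j => (hHG i j).1
  rw [hα] at hij
  have hv : c (Fin.last n) + d (Fin.last n) = 1 := (congrFun hcd _).symm
  apply h1.2
  rcases Nat.eq_zero_or_pos (c (Fin.last n)) with hcv | hcv
  · exact exists_split_of_cone_split hHG' hc hd hcd hcv hij
  · exact exists_split_of_cone_split hHG' hd hc (hcd.trans (add_comm c d))
      (by omega) (hij.trans (add_comm i j))

theorem cone_construction_irreducible_cover {n : ℕ}
    (G : SimpleGraph (Fin n)) (hG : ∀ i : Fin n, ∃ j : Fin n, G.Adj i j)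
    (H : SimpleGraph (Fin (n + 1)))
    -- `H` is obtained from `G` by adding the new vertex `Fin.last n` and some
    -- edges joining it to vertices of `G`: the edges of `H` among the old
    -- vertices are exactly the edges of `G`.
    (hHG : ∀ i j : Fin n, H.Adj i.castSucc j.castSucc ↔ G.Adj i j)
    (h1 : IsIrredUpsCover G (fun _ => 1) (alpha0On G Finset.univ))
    (hα : alpha0On H Finset.univ = alpha0On G Finset.univ + 1) :
    IsIrredUpsCover H (fun _ => 1) (alpha0On H Finset.univ) :=
  cone_construction_irreducible_cover_general G H hHG h1 hα
end
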